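/- arXiv:2505.12553 — 8 statements merged into one kernel-verified Lean document; each statement's English description precedes it below -/
import Mathlib

section
/- Along the Hamiltonian flow started with zero velocity, the velocity satisfies the bound ‖Y_t‖ ≤ t ‖∇f(X_0)‖ cosh(√L · t) for all t ≥ 0. -/
open Set intervalIntegral

/-- Along the Hamiltonian flow started with zero velocity, for an `L`-smooth `f`,
`‖Y_t‖ ≤ t ‖∇f(X_0)‖ cosh(√L t)` for all `t ≥ 0`. -/
theorem velocity_upper_bound {d : ℕ}
    (f : EuclideanSpace ℝ (Fin d) → ℝ) (hf : ContDiff ℝ 1 f) (L : ℝ)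
    (hL : ∀ x y, ‖gradient f x - gradient f y‖ ≤ L * ‖x - y‖)
    (X Y : ℝ → EuclideanSpace ℝ (Fin d))
    (hX : ∀ t, HasDerivAt X (Y t) t)
    (hY : ∀ t, HasDerivAt Y (-gradient f (X t)) t)
    (hY0 : Y 0 = 0) :
    ∀ t ≥ (0 : ℝ),
      ‖Y t‖ ≤ t * ‖gradient f (X 0)‖ * Real.cosh (Real.sqrt L * t) := by
  intro t ht
  set ℓ : ℝ := Real.sqrt L with hℓdef
  have hℓ0 : 0 ≤ ℓ := Real.sqrt_nonneg L
  set A : ℝ := ‖gradient f (X 0)‖ with hAdef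
  have hA0 : 0 ≤ A := norm_nonneg _
  -- continuity facts
  have hXc : Continuous X := continuous_iff_continuousAt.mpr fun s => (hX s).continuousAt
  have hYc : Continuous Y := continuous_iff_continuousAt.mpr fun s => (hY s).continuousAt
  have hgradc : Continuous (fun x => gradient f x) := by
    show Continuous fun x => (InnerProductSpace.toDual ℝ _).symm (fderiv ℝ f x)
    exact (InnerProductSpace.toDual ℝ _).symm.continuous.comp (hf.continuous_fderiv one_ne_zero)
  have hgc : Continuous fun s : ℝ => gradient f (X s) := hgradc.comp hXc
  have hngc : Continuous fun s : ℝ => ‖gradient f (X s)‖ := hgc.norm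
  -- fundamental theorem of calculus identities
  have hYeq : ∀ u : ℝ, Y u = ∫ s in (0:ℝ)..u, -gradient f (X s) := by
    intro u
    have h := intervalIntegral.integral_eq_sub_of_hasDerivAt
      (f := Y) (f' := fun s => -gradient f (X s)) (a := (0:ℝ)) (b := u)
      (fun s _ => hY s) ((hgc.neg).intervalIntegrable 0 u)
    rw [h, hY0, sub_zero]
  have hXeq : ∀ u : ℝ, X u - X 0 = ∫ s in (0:ℝ)..u, Y s := by
    intro u
    rw [intervalIntegral.integral_eq_sub_of_hasDerivAt
      (f := X) (f' := Y) (a := (0:ℝ)) (b := u) (fun s _ => hX s)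
      (hYc.intervalIntegrable 0 u)]
  -- norm of velocity bounded by integral of gradient norms
  have hYnorm : ∀ u : ℝ, 0 ≤ u → ‖Y u‖ ≤ ∫ s in (0:ℝ)..u, ‖gradient f (X s)‖ := by
    intro u hu
    rw [hYeq u]
    refine (intervalIntegral.norm_integral_le_integral_norm hu).trans_eq ?_
    simp [norm_neg]
  -- the key pointwise bound on the gradient along the flow
  have key : ∀ s ∈ Icc (0:ℝ) t, ‖gradient f (X s)‖ ≤ A * Real.cosh (ℓ * s) := by
    rcases le_or_gt L 0 with hLneg | hLpos
    · -- L ≤ 0 : gradient is constant along the flow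
      intro s hs
      have h1 := hL (X s) (X 0)
      have h2 : L * ‖X s - X 0‖ ≤ 0 :=
        mul_nonpos_of_nonpos_of_nonneg hLneg (norm_nonneg _)
      have h3 : ‖gradient f (X s)‖ ≤ A :=
        by linarith [norm_sub_norm_le (gradient f (X s)) (gradient f (X 0))]
      nlinarith [Real.one_le_cosh (ℓ * s)]
    · -- L > 0
      have hℓpos : 0 < ℓ := Real.sqrt_pos.mpr hLpos
      have hℓ2 : ℓ ^ 2 = L := Real.sq_sqrt hLpos.le
      have main : ∀ ε > (0:ℝ), ∀ s ∈ Icc (0:ℝ) t,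
          ‖gradient f (X s)‖ ≤ (A + ε) * Real.cosh (ℓ * s) := by
        intro ε hε
        by_contra hcon
        push_neg at hcon
        obtain ⟨s₀, hs₀, hs₀lt⟩ := hcon
        set U : Set ℝ := {s | s ∈ Icc (0:ℝ) t ∧
          (A + ε) * Real.cosh (ℓ * s) < ‖gradient f (X s)‖} with hUdef
        have hUne : U.Nonempty := ⟨s₀, hs₀, hs₀lt⟩
        have hUbdd : BddBelow U := ⟨0, fun x hx => hx.1.1⟩
        set t₁ : ℝ := sInf U with ht₁def
        have ht₁cl : t₁ ∈ closure U := csInf_mem_closure hUne hUbdd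
        -- closure of U is contained in the closed version
        have hC : t₁ ∈ Icc (0:ℝ) t ∧
            (A + ε) * Real.cosh (ℓ * t₁) ≤ ‖gradient f (X t₁)‖ := by
          have hclosed : IsClosed {s : ℝ | s ∈ Icc (0:ℝ) t ∧
              (A + ε) * Real.cosh (ℓ * s) ≤ ‖gradient f (X s)‖} := by
            apply IsClosed.inter
            · exact isClosed_Icc
            · exact isClosed_le (by fun_prop) hngc
          have hsub : U ⊆ {s : ℝ | s ∈ Icc (0:ℝ) t ∧
              (A + ε) * Real.cosh (ℓ * s) ≤ ‖gradient f (X s)‖} :=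
            fun x hx => ⟨hx.1, hx.2.le⟩
          exact (hclosed.closure_subset_iff.mpr hsub) ht₁cl
        have ht₁mem : t₁ ∈ Icc (0:ℝ) t := hC.1
        -- strict positivity of t₁
        have ht₁pos : 0 < t₁ := by
          rcases ht₁mem.1.eq_or_lt with h0 | h0
          · exfalso
            have := hC.2
            rw [← h0] at this
            simp only [mul_zero, Real.cosh_zero, mul_one] at this
            linarith
          · exact h0
        -- the bound holds strictly below t₁
        have hlt : ∀ s, 0 ≤ s → s < t₁ →
            ‖gradient f (X s)‖ ≤ (A + ε) * Real.cosh (ℓ * s) := by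
          intro s hs0 hst
          by_contra hcon2
          push_neg at hcon2
          have hsmem : s ∈ U := ⟨⟨hs0, hst.le.trans ht₁mem.2⟩, hcon2⟩
          exact absurd (csInf_le hUbdd hsmem) (not_le.mpr hst)
        -- hence also at t₁, by continuity
        have hle : ∀ s ∈ Icc (0:ℝ) t₁,
            ‖gradient f (X s)‖ ≤ (A + ε) * Real.cosh (ℓ * s) := by
          intro s hs
          rcases hs.2.eq_or_lt with heq | hlt'
          · rw [heq]
            have hG : ContinuousAt
                (fun r => ‖gradient f (X r)‖ - (A + ε) * Real.cosh (ℓ * r)) t₁ :=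
              (hngc.sub (by fun_prop)).continuousAt
            have hev : ∀ᶠ z in nhdsWithin t₁ (Iio t₁),
                ‖gradient f (X z)‖ - (A + ε) * Real.cosh (ℓ * z) ≤ 0 := by
              have hmem : Ioo (0:ℝ) t₁ ∈ nhdsWithin t₁ (Iio t₁) :=
                Ioo_mem_nhdsLT_of_mem ⟨ht₁pos, le_rfl⟩
              filter_upwards [hmem] with z hz
              have := hlt z hz.1.le hz.2
              linarith
            have hne : (nhdsWithin t₁ (Iio t₁)).NeBot := nhdsLT_neBot t₁
            have := le_of_tendsto (hG.tendsto.mono_left nhdsWithin_le_nhds) hev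
            linarith
          · exact hlt s hs.1 hlt'
        -- step 1: bound on ‖Y u‖ for u ∈ [0, t₁]
        have hAε : (0:ℝ) < A + ε := by linarith
        have step1 : ∀ u ∈ Icc (0:ℝ) t₁,
            ‖Y u‖ ≤ (A + ε) / ℓ * Real.sinh (ℓ * u) := by
          intro u hu
          have h1 : ‖Y u‖ ≤ ∫ s in (0:ℝ)..u, ‖gradient f (X s)‖ := hYnorm u hu.1
          have h2 : (∫ s in (0:ℝ)..u, ‖gradient f (X s)‖)
              ≤ ∫ s in (0:ℝ)..u, (A + ε) * Real.cosh (ℓ * s) := by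
            apply intervalIntegral.integral_mono_on hu.1
              (hngc.intervalIntegrable 0 u)
              ((by fun_prop : Continuous fun s : ℝ =>
                (A + ε) * Real.cosh (ℓ * s)).intervalIntegrable 0 u)
            intro s hs
            exact hle s ⟨hs.1, hs.2.trans hu.2⟩
          have h3 : (∫ s in (0:ℝ)..u, (A + ε) * Real.cosh (ℓ * s))
              = (A + ε) / ℓ * Real.sinh (ℓ * u) := by
            have hder : ∀ s ∈ uIcc (0:ℝ) u,
                HasDerivAt (fun r => (A + ε) / ℓ * Real.sinh (ℓ * r))
                  ((A + ε) * Real.cosh (ℓ * s)) s := by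
              intro s _
              have d1 : HasDerivAt (fun r : ℝ => ℓ * r) ℓ s := by
                simpa using (hasDerivAt_id s).const_mul ℓ
              have d2 := (Real.hasDerivAt_sinh (ℓ * s)).comp s d1
              have d3 := d2.const_mul ((A + ε) / ℓ)
              refine d3.congr_deriv (Eq.symm ?_)
              field_simp
            rw [intervalIntegral.integral_eq_sub_of_hasDerivAt hder
              ((by fun_prop : Continuous fun s : ℝ =>
                (A + ε) * Real.cosh (ℓ * s)).intervalIntegrable 0 u)]
            simp [Real.sinh_zero]
          linarith
        -- step 2: bound on ‖X t₁ - X 0‖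
        have step2 : ‖X t₁ - X 0‖ ≤ (A + ε) / L * (Real.cosh (ℓ * t₁) - 1) := by
          rw [hXeq t₁]
          have h1 : ‖∫ s in (0:ℝ)..t₁, Y s‖ ≤ ∫ s in (0:ℝ)..t₁, ‖Y s‖ :=
            intervalIntegral.norm_integral_le_integral_norm ht₁mem.1
          have h2 : (∫ s in (0:ℝ)..t₁, ‖Y s‖)
              ≤ ∫ s in (0:ℝ)..t₁, (A + ε) / ℓ * Real.sinh (ℓ * s) := by
            apply intervalIntegral.integral_mono_on ht₁mem.1
              (hYc.norm.intervalIntegrable 0 t₁)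
              ((by fun_prop : Continuous fun s : ℝ =>
                (A + ε) / ℓ * Real.sinh (ℓ * s)).intervalIntegrable 0 t₁)
            intro s hs
            exact step1 s hs
          have h3 : (∫ s in (0:ℝ)..t₁, (A + ε) / ℓ * Real.sinh (ℓ * s))
              = (A + ε) / L * (Real.cosh (ℓ * t₁) - 1) := by
            have hder : ∀ s ∈ uIcc (0:ℝ) t₁,
                HasDerivAt (fun r => (A + ε) / L * Real.cosh (ℓ * r))
                  ((A + ε) / ℓ * Real.sinh (ℓ * s)) s := by
              intro s _
              have d1 : HasDerivAt (fun r : ℝ => ℓ * r) ℓ s := by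
                simpa using (hasDerivAt_id s).const_mul ℓ
              have d2 := (Real.hasDerivAt_cosh (ℓ * s)).comp s d1
              have d3 := d2.const_mul ((A + ε) / L)
              refine d3.congr_deriv (Eq.symm ?_)
              rw [← hℓ2]
              field_simp
            rw [intervalIntegral.integral_eq_sub_of_hasDerivAt hder
              ((by fun_prop : Continuous fun s : ℝ =>
                (A + ε) / ℓ * Real.sinh (ℓ * s)).intervalIntegrable 0 t₁)]
            simp [Real.cosh_zero]
            ring
          linarith
        -- step 3: contradiction
        have h1 := hL (X t₁) (X 0)
        have h2 : L * ‖X t₁ - X 0‖ ≤ (A + ε) * (Real.cosh (ℓ * t₁) - 1) := by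
          calc L * ‖X t₁ - X 0‖
              ≤ L * ((A + ε) / L * (Real.cosh (ℓ * t₁) - 1)) :=
                mul_le_mul_of_nonneg_left step2 hLpos.le
            _ = (A + ε) * (Real.cosh (ℓ * t₁) - 1) := by field_simp
        have h3 : ‖gradient f (X t₁)‖ ≤ A + (A + ε) * (Real.cosh (ℓ * t₁) - 1) := by
          have h4 : ‖gradient f (X t₁)‖ - ‖gradient f (X 0)‖
              ≤ ‖gradient f (X t₁) - gradient f (X 0)‖ := norm_sub_norm_le _ _
          linarith [h1.trans h2]
        have h5 := hC.2
        nlinarith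
      -- pass to the limit ε → 0
      intro s hs
      have hcoshpos : 0 < Real.cosh (ℓ * s) := Real.cosh_pos (ℓ * s)
      refine le_of_forall_pos_le_add fun δ hδ => ?_
      have hεpos : 0 < δ / Real.cosh (ℓ * s) := div_pos hδ hcoshpos
      have := main (δ / Real.cosh (ℓ * s)) hεpos s hs
      calc ‖gradient f (X s)‖
          ≤ (A + δ / Real.cosh (ℓ * s)) * Real.cosh (ℓ * s) := this
        _ = A * Real.cosh (ℓ * s) + δ := by field_simp
  -- conclude
  have h1 : ‖Y t‖ ≤ ∫ s in (0:ℝ)..t, ‖gradient f (X s)‖ := hYnorm t ht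
  have h2 : (∫ s in (0:ℝ)..t, ‖gradient f (X s)‖)
      ≤ ∫ _ in (0:ℝ)..t, A * Real.cosh (ℓ * t) := by
    apply intervalIntegral.integral_mono_on ht
      (hngc.intervalIntegrable 0 t) (intervalIntegrable_const)
    intro s hs
    refine (key s hs).trans ?_
    have : Real.cosh (ℓ * s) ≤ Real.cosh (ℓ * t) := by
      rw [Real.cosh_le_cosh]
      rw [abs_of_nonneg (mul_nonneg hℓ0 hs.1), abs_of_nonneg (mul_nonneg hℓ0 ht)]
      exact mul_le_mul_of_nonneg_left hs.2 hℓ0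
    exact mul_le_mul_of_nonneg_left this hA0
  have h3 : (∫ _ in (0:ℝ)..t, A * Real.cosh (ℓ * t)) = t * A * Real.cosh (ℓ * t) := by
    rw [intervalIntegral.integral_const]
    simp [smul_eq_mul]
    ring
  calc ‖Y t‖ ≤ ∫ _ in (0:ℝ)..t, A * Real.cosh (ℓ * t) := h1.trans h2
    _ = t * A * Real.cosh (ℓ * t) := h3
end

section
/- If a continuous function y : [0,∞) → ℝ satisfies 0 ≤ y(t) ≤ m + L ∫₀ᵗ (t - s) y(s) ds for positive constants m and L, then y(t) ≤ m · cosh(√L · t) for all t ≥ 0. -/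
lemma cosh_integ (a t : ℝ) (ha : a ≠ 0) :
    ∫ s in (0:ℝ)..t, (t - s) * Real.cosh (a*s)
      = (Real.cosh (a*t) - 1)/a^2 := by
  have key : ∀ s ∈ Set.uIcc (0:ℝ) t,
      HasDerivAt (fun s => (t-s)*Real.sinh (a*s)/a + Real.cosh (a*s)/a^2)
        ((t-s)*Real.cosh (a*s)) s := by
    intro s _
    have hlin : HasDerivAt (fun s : ℝ => a*s) a s := by
      simpa using (hasDerivAt_id s).const_mul a
    have hsinh : HasDerivAt (fun s => Real.sinh (a*s)) (Real.cosh (a*s) * a) s :=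
      (Real.hasDerivAt_sinh (a*s)).comp s hlin
    have hcosh : HasDerivAt (fun s => Real.cosh (a*s)) (Real.sinh (a*s) * a) s :=
      (Real.hasDerivAt_cosh (a*s)).comp s hlin
    have h1 : HasDerivAt (fun s : ℝ => t - s) (-1) s := by
      simpa using (hasDerivAt_id s).const_sub t
    have := ((h1.mul hsinh).div_const a).add (hcosh.div_const (a^2))
    refine this.congr_deriv ?_
    rw [div_add_div _ _ ha (pow_ne_zero 2 ha), div_eq_iff (mul_ne_zero ha (pow_ne_zero 2 ha))]
    ring
  rw [intervalIntegral.integral_eq_sub_of_hasDerivAt key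
    (((continuous_const.sub continuous_id).mul
      (Real.continuous_cosh.comp (continuous_const.mul continuous_id))).intervalIntegrable 0 t)]
  simp [Real.sinh_zero, Real.cosh_zero]
  field_simp

/-- Grönwall-type lemma: if a continuous `y` satisfies
`0 ≤ y t ≤ m + L ∫₀ᵗ (t - s) y s ds` for positive `m, L`, then `y t ≤ m cosh(√L t)`. -/
theorem cosh_gronwall (y : ℝ → ℝ) (hy : Continuous y) (m L : ℝ)
    (hm : 0 < m) (hL : 0 < L)
    (hbound : ∀ t ≥ (0 : ℝ),
      0 ≤ y t ∧ y t ≤ m + L * ∫ s in (0 : ℝ)..t, (t - s) * y s) :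
    ∀ t ≥ (0 : ℝ), y t ≤ m * Real.cosh (Real.sqrt L * t) := by
  set a := Real.sqrt L with hadef
  have ha : 0 < a := Real.sqrt_pos.mpr hL
  have ha2 : a^2 = L := Real.sq_sqrt hL.le
  -- main step: for all c > 1, y t ≤ c * m * cosh (a t)
  have main : ∀ c > (1:ℝ), ∀ t ≥ (0:ℝ), y t ≤ c * (m * Real.cosh (a * t)) := by
    intro c hc
    by_contra h
    push_neg at h
    set S : Set ℝ := {t | 0 ≤ t ∧ c * (m * Real.cosh (a*t)) ≤ y t} with hS
    have hSne : S.Nonempty := by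
      obtain ⟨t, ht, hlt⟩ := h
      exact ⟨t, ht, hlt.le⟩
    have hSclosed : IsClosed S := by
      apply IsClosed.inter (isClosed_le continuous_const continuous_id)
      exact isClosed_le (continuous_const.mul (continuous_const.mul (Real.continuous_cosh.comp (continuous_const.mul continuous_id)))) hy
    have hSbdd : BddBelow S := ⟨0, fun x hx => hx.1⟩
    set t₀ := sInf S with ht₀def
    have ht₀S : t₀ ∈ S := hSclosed.csInf_mem hSne hSbdd
    have ht₀0 : 0 ≤ t₀ := ht₀S.1
    have hy0 : y 0 ≤ m := by
      have := (hbound 0 le_rfl).2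
      simpa using this
    have h0notS : (0:ℝ) ∉ S := by
      intro h0
      have : c * (m * Real.cosh 0) ≤ y 0 := by simpa using h0.2
      rw [Real.cosh_zero] at this
      nlinarith
    have ht₀pos : 0 < t₀ := lt_of_le_of_ne ht₀0 (fun h => h0notS (h ▸ ht₀S))
    -- below t₀, strict inequality
    have hbelow : ∀ s, 0 ≤ s → s < t₀ → y s ≤ c * (m * Real.cosh (a*s)) := by
      intro s hs hst
      by_contra hcon
      push_neg at hcon
      exact absurd (csInf_le hSbdd ⟨hs, hcon.le⟩) (not_le.mpr hst)
    have hmono : (∫ s in (0:ℝ)..t₀, (t₀ - s) * y s)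
        ≤ ∫ s in (0:ℝ)..t₀, (t₀ - s) * (c * (m * Real.cosh (a*s))) := by
      apply intervalIntegral.integral_mono_on ht₀0
      · exact ((continuous_const.sub continuous_id).mul hy).intervalIntegrable 0 t₀
      · exact ((continuous_const.sub continuous_id).mul (continuous_const.mul (continuous_const.mul (Real.continuous_cosh.comp (continuous_const.mul continuous_id))))).intervalIntegrable 0 t₀
      · intro s hs
        rcases eq_or_lt_of_le hs.2 with h | h
        · simp [h]
        · have := hbelow s hs.1 h
          have hts : 0 ≤ t₀ - s := by linarith [hs.2]
          exact mul_le_mul_of_nonneg_left this hts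
    have hcompute : (∫ s in (0:ℝ)..t₀, (t₀ - s) * (c * (m * Real.cosh (a*s))))
        = c * m * ((Real.cosh (a*t₀) - 1)/a^2) := by
      have : (∫ s in (0:ℝ)..t₀, (t₀ - s) * (c * (m * Real.cosh (a*s))))
          = c * m * ∫ s in (0:ℝ)..t₀, (t₀ - s) * Real.cosh (a*s) := by
        rw [← intervalIntegral.integral_const_mul]
        apply intervalIntegral.integral_congr
        intro s _
        ring
      rw [this, cosh_integ a t₀ ha.ne']
    have hb := (hbound t₀ ht₀0).2
    have hLmul : L * (c * m * ((Real.cosh (a*t₀) - 1)/a^2))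
        = c * m * (Real.cosh (a*t₀) - 1) := by
      rw [← ha2]; field_simp
    have hchain : y t₀ ≤ m + c * m * (Real.cosh (a*t₀) - 1) := by
      calc y t₀ ≤ m + L * ∫ s in (0:ℝ)..t₀, (t₀ - s) * y s := hb
        _ ≤ m + L * ∫ s in (0:ℝ)..t₀, (t₀ - s) * (c * (m * Real.cosh (a*s))) := by
            have := mul_le_mul_of_nonneg_left hmono hL.le
            linarith
        _ = m + c * m * (Real.cosh (a*t₀) - 1) := by rw [hcompute, hLmul]
    have hge : c * (m * Real.cosh (a*t₀)) ≤ y t₀ := ht₀S.2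
    nlinarith
  intro t ht
  by_contra hcon
  push_neg at hcon
  set M := m * Real.cosh (a*t) with hM
  have hMpos : 0 < M := mul_pos hm (Real.cosh_pos _)
  have hr : (1:ℝ) < y t / M := (one_lt_div hMpos).mpr hcon
  set c := (1 + y t / M) / 2 with hcdef
  have hc1 : (1:ℝ) < c := by rw [hcdef]; linarith
  have hc2 : c < y t / M := by rw [hcdef]; linarith
  have := main c hc1 t ht
  have hcM : c * M < y t := by
    have h1 : c * M < (y t / M) * M := by nlinarith
    rwa [div_mul_cancel₀ _ hMpos.ne'] at h1
  rw [← hM] at this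
  linarith
end

section
/- Along the Hamiltonian flow started with zero velocity, for all 0 ≤ t ≤ 1/√L, the velocity satisfies the lower bound ‖Y_t‖ ≥ (t/√2) ‖∇f(X_0)‖. -/
set_option maxHeartbeats 1000000
open Real MeasureTheory intervalIntegral Set

/-- Along the Hamiltonian flow started with zero velocity, for an `L`-smooth `f` with `L > 0`,
for all `0 ≤ t ≤ 1/√L` the velocity satisfies `‖Y_t‖ ≥ (t/√2) ‖∇f(X_0)‖`. -/
theorem velocity_lower_bound {d : ℕ}
    (f : EuclideanSpace ℝ (Fin d) → ℝ) (hf : ContDiff ℝ 1 f) (L : ℝ) (hLpos : 0 < L)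
    (hL : ∀ x y, ‖gradient f x - gradient f y‖ ≤ L * ‖x - y‖)
    (X Y : ℝ → EuclideanSpace ℝ (Fin d))
    (hX : ∀ t, HasDerivAt X (Y t) t)
    (hY : ∀ t, HasDerivAt Y (-gradient f (X t)) t)
    (hY0 : Y 0 = 0) :
    ∀ t, 0 ≤ t → t ≤ 1 / Real.sqrt L →
      (t / Real.sqrt 2) * ‖gradient f (X 0)‖ ≤ ‖Y t‖ := by
  intro t ht htL
  set g : EuclideanSpace ℝ (Fin d) := gradient f (X 0) with hg
  set G : ℝ := ‖g‖ with hG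
  have hGnn : 0 ≤ G := norm_nonneg _
  have hsL : 0 < Real.sqrt L := Real.sqrt_pos.2 hLpos
  set sL : ℝ := Real.sqrt L with hsLdef
  have hsL2 : sL * sL = L := Real.mul_self_sqrt hLpos.le
  have htsL : sL * t ≤ 1 := by
    rw [div_eq_mul_inv, one_mul] at htL
    calc sL * t ≤ sL * sL⁻¹ := by
          exact mul_le_mul_of_nonneg_left htL hsL.le
    _ = 1 := mul_inv_cancel₀ hsL.ne'
  -- continuity facts
  have hXc : Continuous X := continuous_iff_continuousAt.2 fun u => (hX u).continuousAt
  have hYc : Continuous Y := continuous_iff_continuousAt.2 fun u => (hY u).continuousAt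
  have hgc : Continuous (gradient f) := by
    have : LipschitzWith L.toNNReal (gradient f) := by
      apply LipschitzWith.of_dist_le_mul
      intro x y
      rw [dist_eq_norm, dist_eq_norm]
      simpa [Real.coe_toNNReal _ hLpos.le] using hL x y
    exact this.continuous
  have hgXc : Continuous fun u => gradient f (X u) := hgc.comp hXc
  -- the Gronwall vector
  set Z : ℝ → EuclideanSpace ℝ (Fin d) × EuclideanSpace ℝ (Fin d) :=
    fun u => (X u - X 0, sL⁻¹ • Y u) with hZdef
  have hZ : ∀ u, HasDerivAt Z (Y u, sL⁻¹ • (-gradient f (X u))) u := fun u =>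
    ((hX u).sub_const (X 0)).prodMk ((hY u).const_smul sL⁻¹)
  have hZc : ContinuousOn Z (Icc 0 t) :=
    (((hXc.sub continuous_const).prodMk (hYc.const_smul sL⁻¹)).continuousOn)
  have hgradb : ∀ u, ‖gradient f (X u)‖ ≤ G + L * ‖X u - X 0‖ := by
    intro u
    calc ‖gradient f (X u)‖ ≤ ‖gradient f (X u) - g‖ + ‖g‖ := by
          simpa using norm_add_le (gradient f (X u) - g) g
    _ ≤ L * ‖X u - X 0‖ + G := by
          have := hL (X u) (X 0)
          rw [hg]; linarith [hL (X u) (X 0)]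
    _ = G + L * ‖X u - X 0‖ := by ring
  have hbound : ∀ u ∈ Ico 0 t, ‖(Y u, sL⁻¹ • (-gradient f (X u)))‖ ≤ sL * ‖Z u‖ + G / sL := by
    intro u _
    have h1 : ‖X u - X 0‖ ≤ ‖Z u‖ := le_max_left _ _
    have h2 : ‖sL⁻¹ • Y u‖ ≤ ‖Z u‖ := le_max_right _ _
    rw [Prod.norm_def]
    apply max_le
    · have : ‖Y u‖ = sL * ‖sL⁻¹ • Y u‖ := by
        rw [norm_smul, norm_inv, Real.norm_eq_abs, abs_of_pos hsL]
        field_simp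
      rw [this]
      have : sL * ‖sL⁻¹ • Y u‖ ≤ sL * ‖Z u‖ := mul_le_mul_of_nonneg_left h2 hsL.le
      have hG' : 0 ≤ G / sL := div_nonneg hGnn hsL.le
      linarith
    · rw [norm_smul, norm_inv, Real.norm_eq_abs, abs_of_pos hsL, norm_neg]
      calc sL⁻¹ * ‖gradient f (X u)‖ ≤ sL⁻¹ * (G + L * ‖X u - X 0‖) := by
            apply mul_le_mul_of_nonneg_left (hgradb u) (inv_nonneg.2 hsL.le)
      _ = G / sL + sL⁻¹ * L * ‖X u - X 0‖ := by ring
      _ ≤ G / sL + sL * ‖Z u‖ := by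
            have : sL⁻¹ * L = sL := by
              field_simp [← hsL2]
              rw [← hsL2]; ring
            rw [this]
            have := mul_le_mul_of_nonneg_left h1 hsL.le
            linarith
      _ = sL * ‖Z u‖ + G / sL := by ring
  have hZ0 : ‖Z 0‖ ≤ 0 := by simp [hZdef, hY0]
  have gron := norm_le_gronwallBound_of_norm_deriv_right_le hZc
    (fun u hu => (hZ u).hasDerivWithinAt) hZ0 hbound
  -- translate the Gronwall bound
  have hZb : ∀ u ∈ Icc (0:ℝ) t, ‖Z u‖ ≤ G / L * (Real.exp (sL * u) - 1) := by
    intro u hu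
    have := gron u hu
    rw [gronwallBound_of_K_ne_0 hsL.ne'] at this
    simp only [zero_mul, zero_add, sub_zero] at this
    calc ‖Z u‖ ≤ G / sL / sL * (Real.exp (sL * u) - 1) := by
          simpa [zero_mul] using this
    _ = G / L * (Real.exp (sL * u) - 1) := by
          rw [div_div, hsL2]
  -- exp convexity bound: exp x ≤ 1 + (e-1)x on [0,1]
  have hexp : ∀ x : ℝ, 0 ≤ x → x ≤ 1 → Real.exp x - 1 ≤ (Real.exp 1 - 1) * x := by
    intro x hx0 hx1
    have := convexOn_exp.2 (mem_univ (0:ℝ)) (mem_univ (1:ℝ)) (by linarith : (0:ℝ) ≤ 1 - x)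
      hx0 (by ring : (1 - x) + x = 1)
    simp only [smul_eq_mul, mul_zero, mul_one, zero_add, Real.exp_zero] at this
    nlinarith [this]
  -- velocity a priori bound
  have hYb : ∀ u ∈ Icc (0:ℝ) t, ‖Y u‖ ≤ (Real.exp 1 - 1) * G * u := by
    intro u hu
    have husL : sL * u ≤ 1 := by
      have := mul_le_mul_of_nonneg_left hu.2 hsL.le
      linarith
    have h2 : ‖sL⁻¹ • Y u‖ ≤ ‖Z u‖ := le_max_right _ _
    have hYeq : ‖Y u‖ = sL * ‖sL⁻¹ • Y u‖ := by
      rw [norm_smul, norm_inv, Real.norm_eq_abs, abs_of_pos hsL]; field_simp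
    rw [hYeq]
    calc sL * ‖sL⁻¹ • Y u‖ ≤ sL * (G / L * (Real.exp (sL * u) - 1)) :=
          mul_le_mul_of_nonneg_left (h2.trans (hZb u hu)) hsL.le
    _ ≤ sL * (G / L * ((Real.exp 1 - 1) * (sL * u))) := by
          apply mul_le_mul_of_nonneg_left _ hsL.le
          apply mul_le_mul_of_nonneg_left _ (div_nonneg hGnn hLpos.le)
          exact hexp _ (mul_nonneg hsL.le hu.1) husL
    _ = (Real.exp 1 - 1) * G * u * (sL * sL / L) := by ring
    _ = (Real.exp 1 - 1) * G * u := by rw [hsL2]; field_simp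
  -- position bound: ‖X s - X 0‖ ≤ (e-1) G s^2 / 2 for s ∈ [0, t]
  have hXb : ∀ s ∈ Icc (0:ℝ) t, ‖X s - X 0‖ ≤ (Real.exp 1 - 1) * G * s ^ 2 / 2 := by
    intro s hs
    have hXint : ∫ u in (0:ℝ)..s, Y u = X s - X 0 :=
      intervalIntegral.integral_eq_sub_of_hasDerivAt
        (fun u _ => hX u) (hYc.intervalIntegrable 0 s)
    rw [← hXint]
    have hmaj : ∀ᵐ u ∂(volume.restrict (Set.uIoc (0:ℝ) s)), ‖Y u‖ ≤ (Real.exp 1 - 1) * G * u := by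
      rw [Set.uIoc_of_le hs.1]
      refine (ae_restrict_iff' measurableSet_Ioc).2 (Filter.Eventually.of_forall fun u hu => ?_)
      exact hYb u ⟨hu.1.le, hu.2.trans hs.2⟩
    have := intervalIntegral.norm_integral_le_abs_of_norm_le hmaj
      (Continuous.intervalIntegrable (by fun_prop) 0 s)
    refine this.trans ?_
    rw [abs_of_nonneg]
    · have : ∫ u in (0:ℝ)..s, (Real.exp 1 - 1) * G * u =
        (Real.exp 1 - 1) * G * (s ^ 2 / 2) := by
        rw [intervalIntegral.integral_const_mul, integral_id]
        ring
      rw [this]; ring_nf; rfl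
    · apply intervalIntegral.integral_nonneg hs.1
      intro u hu
      have h1 : (0:ℝ) ≤ Real.exp 1 - 1 := by nlinarith [Real.add_one_le_exp (1:ℝ)]
      have := mul_nonneg (mul_nonneg h1 hGnn) hu.1
      linarith
  -- main integral identity for Y t
  have hYint : ∫ s in (0:ℝ)..t, -gradient f (X s) = Y t := by
    have := intervalIntegral.integral_eq_sub_of_hasDerivAt
      (f := Y) (f' := fun s => -gradient f (X s))
      (fun u _ => hY u) ((hgXc.neg).intervalIntegrable 0 t)
    rw [this, hY0, sub_zero]
  have hsplit : Y t + t • g = ∫ s in (0:ℝ)..t, (g - gradient f (X s)) := by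
    rw [intervalIntegral.integral_sub (Continuous.intervalIntegrable (by fun_prop) 0 t)
      (hgXc.intervalIntegrable 0 t)]
    rw [intervalIntegral.integral_const, sub_zero]
    have : ∫ s in (0:ℝ)..t, gradient f (X s) = -Y t := by
      rw [← hYint, ← intervalIntegral.integral_neg]; simp
    rw [this]
    abel
  -- bound the error term
  have herr : ‖Y t + t • g‖ ≤ (Real.exp 1 - 1) * G * t / 6 := by
    rw [hsplit]
    have hmaj : ∀ᵐ s ∂(volume.restrict (Set.uIoc (0:ℝ) t)),
        ‖g - gradient f (X s)‖ ≤ L * ((Real.exp 1 - 1) * G * s ^ 2 / 2) := by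
      rw [Set.uIoc_of_le ht]
      refine (ae_restrict_iff' measurableSet_Ioc).2 (Filter.Eventually.of_forall fun s hs => ?_)
      have h1 : ‖g - gradient f (X s)‖ ≤ L * ‖X s - X 0‖ := by
        rw [norm_sub_rev, hg]
        simpa using hL (X s) (X 0)
      exact h1.trans (mul_le_mul_of_nonneg_left (hXb s ⟨hs.1.le, hs.2⟩) hLpos.le)
    have hIb := intervalIntegral.norm_integral_le_abs_of_norm_le hmaj
      (Continuous.intervalIntegrable (by fun_prop) 0 t)
    refine hIb.trans ?_
    have hIval : ∫ s in (0:ℝ)..t, L * ((Real.exp 1 - 1) * G * s ^ 2 / 2) =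
        L * (Real.exp 1 - 1) * G * t ^ 3 / 6 := by
      have : (fun s : ℝ => L * ((Real.exp 1 - 1) * G * s ^ 2 / 2)) =
          fun s : ℝ => (L * (Real.exp 1 - 1) * G / 2) * s ^ 2 := by
        funext s; ring
      rw [this, intervalIntegral.integral_const_mul]
      have : ∫ s in (0:ℝ)..t, s ^ 2 = t ^ 3 / 3 := by
        rw [integral_pow]; norm_num
      rw [this]; ring
    have hst : 0 ≤ sL * t := mul_nonneg hsL.le ht
    have hLt2 : L * t ^ 2 ≤ 1 := by
      have h2 : (sL * t) * (sL * t) ≤ 1 * 1 := mul_le_mul htsL htsL hst (by norm_num)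
      calc L * t ^ 2 = (sL * t) * (sL * t) := by rw [← hsL2]; ring
      _ ≤ 1 := by linarith
    have h1 : (0:ℝ) ≤ Real.exp 1 - 1 := by nlinarith [Real.add_one_le_exp (1:ℝ)]
    have hA : 0 ≤ (Real.exp 1 - 1) * G * t := mul_nonneg (mul_nonneg h1 hGnn) ht
    have hnn : 0 ≤ L * (Real.exp 1 - 1) * G * t ^ 3 / 6 := by
      apply div_nonneg _ (by norm_num)
      have := mul_nonneg (mul_nonneg (mul_nonneg hLpos.le h1) hGnn) (pow_nonneg ht 3)
      linarith
    rw [hIval, abs_of_nonneg hnn]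
    have hB := mul_le_mul_of_nonneg_left hLt2 hA
    calc L * (Real.exp 1 - 1) * G * t ^ 3 / 6
        = ((Real.exp 1 - 1) * G * t) * (L * t ^ 2) / 6 := by ring
    _ ≤ ((Real.exp 1 - 1) * G * t) * 1 / 6 := by linarith
    _ = (Real.exp 1 - 1) * G * t / 6 := by ring
  -- conclude
  have htg : ‖t • g‖ = t * G := by
    rw [norm_smul, Real.norm_eq_abs, abs_of_nonneg ht]
  have hlow : t * G - (Real.exp 1 - 1) * G * t / 6 ≤ ‖Y t‖ := by
    have : ‖t • g‖ ≤ ‖Y t + t • g‖ + ‖Y t‖ := by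
      calc ‖t • g‖ = ‖(Y t + t • g) - Y t‖ := by rw [add_sub_cancel_left]
      _ ≤ ‖Y t + t • g‖ + ‖Y t‖ := norm_sub_le _ _
    rw [htg] at this
    linarith
  refine le_trans ?_ hlow
  -- numeric: t/√2 * G ≤ t G (1 - (e-1)/6)
  have hs2 : Real.sqrt 2 * Real.sqrt 2 = 2 := Real.mul_self_sqrt (by norm_num)
  have hs2pos : 0 < Real.sqrt 2 := Real.sqrt_pos.2 (by norm_num)
  have hs2lb : 1.414 ≤ Real.sqrt 2 := by nlinarith
  have he : Real.exp 1 ≤ 2.7182818286 := Real.exp_one_lt_d9.le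
  have key : 1 / Real.sqrt 2 ≤ 1 - (Real.exp 1 - 1) / 6 := by
    rw [div_le_iff₀ hs2pos] at *
    nlinarith
  have := mul_le_mul_of_nonneg_left key (mul_nonneg ht hGnn)
  calc t / Real.sqrt 2 * G = t * G * (1 / Real.sqrt 2) := by ring
  _ ≤ t * G * (1 - (Real.exp 1 - 1) / 6) := mul_le_mul_of_nonneg_left key (mul_nonneg ht hGnn)
  _ = t * G - (Real.exp 1 - 1) * G * t / 6 := by ring
end

section
/- Hamiltonian flow for optimization with short fixed integration time h ≤ 1/√L satisfies the descent inequality f(x_{k+1}) ≤ f(x_k) - (h²/4)‖∇f(x_k)‖², where (x_{k+1}, y_{k+1}) is obtained by evolving the Hamiltonian flow for time h from (x_k, 0). -/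
open Set intervalIntegral InnerProductSpace

lemma exp_aux {v : ℝ} (h0 : 0 ≤ v) (h1 : v ≤ 1) : Real.exp v - 1 ≤ 17/9 * v := by
  have H := Real.exp_bound (x := v) (abs_le.2 ⟨by linarith, h1⟩) (n := 3) (by norm_num)
  rw [abs_le] at H
  have h2 := H.2
  norm_num [Finset.sum_range_succ, Nat.factorial] at h2
  have hv : |v| = v := abs_of_nonneg h0
  rw [hv] at h2
  nlinarith [sq_nonneg v, pow_le_one₀ h0 h1 (n := 2), pow_le_one₀ h0 h1 (n := 3)]

lemma norm_int_le {E : Type*} [NormedAddCommGroup E] [NormedSpace ℝ E]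
    {φ : ℝ → E} {b : ℝ → ℝ} {t : ℝ} (ht : 0 ≤ t) (hφ : Continuous φ) (hb : Continuous b)
    (hbd : ∀ s ∈ Icc 0 t, ‖φ s‖ ≤ b s) :
    ‖∫ s in (0:ℝ)..t, φ s‖ ≤ ∫ s in (0:ℝ)..t, b s := by
  refine (intervalIntegral.norm_integral_le_integral_norm ht).trans ?_
  exact intervalIntegral.integral_mono_on ht (hφ.norm.intervalIntegrable 0 t)
    (hb.intervalIntegrable 0 t) hbd

lemma norm_int_le_pow {E : Type*} [NormedAddCommGroup E] [NormedSpace ℝ E]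
    {φ : ℝ → E} {t : ℝ} (ht : 0 ≤ t) (hφ : Continuous φ) {c : ℝ} {n : ℕ}
    (hbd : ∀ s ∈ Icc 0 t, ‖φ s‖ ≤ c * s ^ n) :
    ‖∫ s in (0:ℝ)..t, φ s‖ ≤ c * t ^ (n + 1) / (n + 1) := by
  refine (norm_int_le ht hφ (continuous_const.mul (continuous_pow n)) hbd).trans_eq ?_
  simp only [Pi.mul_apply]
  rw [intervalIntegral.integral_const_mul, integral_pow]
  ring

lemma norm_int_le_pow2 {E : Type*} [NormedAddCommGroup E] [NormedSpace ℝ E]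
    {φ : ℝ → E} {t : ℝ} (ht : 0 ≤ t) (hφ : Continuous φ) {c c' : ℝ} {m n : ℕ}
    (hbd : ∀ s ∈ Icc 0 t, ‖φ s‖ ≤ c * s ^ m + c' * s ^ n) :
    ‖∫ s in (0:ℝ)..t, φ s‖ ≤ c * t ^ (m + 1) / (m + 1) + c' * t ^ (n + 1) / (n + 1) := by
  have hcont : Continuous fun s : ℝ => c * s ^ m + c' * s ^ n :=
    (continuous_const.mul (continuous_pow m)).add (continuous_const.mul (continuous_pow n))
  refine (norm_int_le ht hφ hcont hbd).trans_eq ?_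
  rw [intervalIntegral.integral_add (f := fun s => c * s ^ m) (g := fun s => c' * s ^ n)
    ((continuous_const.mul (continuous_pow m)).intervalIntegrable 0 t)
    ((continuous_const.mul (continuous_pow n)).intervalIntegrable 0 t),
    intervalIntegral.integral_const_mul, intervalIntegral.integral_const_mul,
    integral_pow, integral_pow]
  ring

lemma energy_aux {d : ℕ} {f : EuclideanSpace ℝ (Fin d) → ℝ} (hf : ContDiff ℝ 1 f)
    {X Y : ℝ → EuclideanSpace ℝ (Fin d)} (hX : ∀ t, HasDerivAt X (Y t) t)
    (hY : ∀ t, HasDerivAt Y (-gradient f (X t)) t) (t : ℝ) :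
    f (X t) + ‖Y t‖ ^ 2 / 2 = f (X 0) + ‖Y 0‖ ^ 2 / 2 := by
  set En : ℝ → ℝ := fun t => f (X t) + (inner ℝ (Y t) (Y t) : ℝ) / 2 with hEn
  have hEn' : ∀ t, HasDerivAt En 0 t := by
    intro t
    have h1 : HasDerivAt (fun t => f (X t)) ((toDual ℝ _ (gradient f (X t))) (Y t)) t :=
      ((hf.differentiable one_ne_zero) (X t)).hasGradientAt.hasFDerivAt.comp_hasDerivAt t (hX t)
    have h2 := ((hY t).inner ℝ (hY t)).div_const 2
    have h3 := h1.add h2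
    refine h3.congr_deriv ?_
    simp only [toDual_apply_apply, inner_neg_left, inner_neg_right,
      real_inner_comm (Y t) (gradient f (X t))]
    ring
  have hconst : En t = En 0 :=
    is_const_of_deriv_eq_zero (fun s => (hEn' s).differentiableAt)
      (fun s => (hEn' s).deriv) t 0
  simp only [hEn, real_inner_self_eq_norm_sq] at hconst
  linarith

lemma gronwall_aux {d : ℕ} {f : EuclideanSpace ℝ (Fin d) → ℝ} {L h : ℝ} (hLpos : 0 < L)
    (hL : ∀ x y, ‖gradient f x - gradient f y‖ ≤ L * ‖x - y‖)
    {xk : EuclideanSpace ℝ (Fin d)} {X Y : ℝ → EuclideanSpace ℝ (Fin d)}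
    (hX0 : X 0 = xk) (hY0 : Y 0 = 0)
    (hX : ∀ t, HasDerivAt X (Y t) t)
    (hY : ∀ t, HasDerivAt Y (-gradient f (X t)) t)
    (hu1 : Real.sqrt L * h ≤ 1) :
    ∀ t ∈ Icc (0:ℝ) h, Real.sqrt L * ‖X t - xk‖ ≤ 17/9 * ‖gradient f xk‖ * t := by
  have hsL : 0 < Real.sqrt L := Real.sqrt_pos.2 hLpos
  set sL := Real.sqrt L with hsLdef
  have hL2 : sL ^ 2 = L := Real.sq_sqrt hLpos.le
  set G := ‖gradient f xk‖ with hGdef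
  have hGnn : 0 ≤ G := norm_nonneg _
  have hXc : Continuous X := continuous_iff_continuousAt.2 fun t => (hX t).continuousAt
  have hYc : Continuous Y := continuous_iff_continuousAt.2 fun t => (hY t).continuousAt
  set F : ℝ → (EuclideanSpace ℝ (Fin d)) × (EuclideanSpace ℝ (Fin d)) :=
    fun t => (sL • (X t - xk), Y t) with hF
  have hFc : Continuous F := ((hXc.sub continuous_const).const_smul sL).prodMk hYc
  have hF' : ∀ t, HasDerivAt F (sL • Y t, -gradient f (X t)) t := fun t =>
    (((hX t).sub_const xk).const_smul sL).prodMk (hY t)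
  have key := norm_le_gronwallBound_of_norm_deriv_right_le (δ := 0) (K := sL) (ε := G)
    (a := 0) (b := h) hFc.continuousOn (fun t _ => (hF' t).hasDerivWithinAt)
    (by simp [hF, hX0, Prod.norm_def, hY0]) ?_
  · intro t ht
    have hb := key t ht
    rw [sub_zero, gronwallBound_of_K_ne_0 hsL.ne'] at hb
    simp only [zero_mul, zero_add] at hb
    have hfst : sL * ‖X t - xk‖ ≤ ‖F t‖ := by
      have h1 : ‖sL • (X t - xk)‖ ≤ ‖F t‖ := le_max_left _ _
      rwa [norm_smul, Real.norm_eq_abs, abs_of_pos hsL] at h1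
    have hexp : Real.exp (sL * t) - 1 ≤ 17/9 * (sL * t) := by
      refine exp_aux (mul_nonneg hsL.le ht.1) ?_
      calc sL * t ≤ sL * h := by nlinarith [ht.2, hsL.le]
      _ ≤ 1 := hu1
    calc sL * ‖X t - xk‖ ≤ ‖F t‖ := hfst
      _ ≤ G / sL * (Real.exp (sL * t) - 1) := hb
      _ ≤ G / sL * (17/9 * (sL * t)) := by
          apply mul_le_mul_of_nonneg_left hexp (by positivity)
      _ = 17/9 * G * t := by field_simp
  · intro t _
    have hmax1 : ‖sL • Y t‖ ≤ sL * ‖F t‖ + G := by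
      rw [norm_smul, Real.norm_eq_abs, abs_of_pos hsL]
      have h1 : ‖Y t‖ ≤ ‖F t‖ := le_max_right _ _
      nlinarith [hsL.le]
    have hmax2 : ‖-gradient f (X t)‖ ≤ sL * ‖F t‖ + G := by
      rw [norm_neg]
      have ht1 : ‖gradient f (X t)‖ ≤ ‖gradient f (X t) - gradient f xk‖ + G := by
        simpa using norm_add_le (gradient f (X t) - gradient f xk) (gradient f xk)
      have ht2 : ‖gradient f (X t) - gradient f xk‖ ≤ L * ‖X t - xk‖ := hL (X t) xk
      have ht3 : sL * ‖X t - xk‖ ≤ ‖F t‖ := by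
        have h1 : ‖sL • (X t - xk)‖ ≤ ‖F t‖ := le_max_left _ _
        rwa [norm_smul, Real.norm_eq_abs, abs_of_pos hsL] at h1
      have ht4 : L * ‖X t - xk‖ = sL * (sL * ‖X t - xk‖) := by
        rw [← hL2]; ring
      nlinarith [hsL.le]
    exact max_le hmax1 hmax2

lemma hident_aux {d : ℕ} {f : EuclideanSpace ℝ (Fin d) → ℝ}
    {X Y : ℝ → EuclideanSpace ℝ (Fin d)} (hY0 : Y 0 = 0)
    (hY : ∀ t, HasDerivAt Y (-gradient f (X t)) t)
    (hfXc : Continuous fun s => gradient f (X s)) (g : EuclideanSpace ℝ (Fin d)) (t : ℝ) :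
    Y t + t • g = ∫ s in (0:ℝ)..t, (g - gradient f (X s)) := by
  have hYint : Y t = ∫ s in (0:ℝ)..t, -gradient f (X s) := by
    rw [intervalIntegral.integral_eq_sub_of_hasDerivAt (fun s _ => hY s)
      ((hfXc.neg).intervalIntegrable 0 t), hY0, sub_zero]
  rw [intervalIntegral.integral_sub ((continuous_const).intervalIntegrable 0 t)
    (hfXc.intervalIntegrable 0 t), intervalIntegral.integral_const, sub_eq_add_neg,
    ← intervalIntegral.integral_neg, ← hYint, sub_zero]
  abel

lemma xident_aux {d : ℕ} {xk : EuclideanSpace ℝ (Fin d)}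
    {X Y : ℝ → EuclideanSpace ℝ (Fin d)} (hX0 : X 0 = xk)
    (hX : ∀ t, HasDerivAt X (Y t) t) (hYC : ∀ t, ContinuousAt Y t)
    (g : EuclideanSpace ℝ (Fin d)) (t : ℝ) :
    X t - xk + (t ^ 2 / 2) • g = ∫ s in (0:ℝ)..t, (Y s + s • g) := by
  have hYc : Continuous Y := continuous_iff_continuousAt.2 fun t => (hYC t)
  have hsg : Continuous fun s : ℝ => s • g := continuous_id.smul continuous_const
  have hXint : X t - xk = ∫ s in (0:ℝ)..t, Y s := by
    rw [intervalIntegral.integral_eq_sub_of_hasDerivAt (fun s _ => hX s)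
      (hYc.intervalIntegrable 0 t), hX0]
  rw [intervalIntegral.integral_add (hYc.intervalIntegrable 0 t)
    (hsg.intervalIntegrable 0 t),
    ← hXint, intervalIntegral.integral_smul_const, integral_id]
  norm_num

set_option maxHeartbeats 2000000 in
/-- One step of HF-opt with integration time `h ≤ 1/√L` satisfies the descent inequality
`f(x_{k+1}) ≤ f(x_k) - (h²/4) ‖∇f(x_k)‖²`, where `x_{k+1} = X h` is the position of the
Hamiltonian flow started at `(x_k, 0)` and run for time `h`. -/
theorem hf_opt_short_time_descent {d : ℕ}
    (f : EuclideanSpace ℝ (Fin d) → ℝ) (hf : ContDiff ℝ 1 f) (L : ℝ) (hLpos : 0 < L)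
    (hL : ∀ x y, ‖gradient f x - gradient f y‖ ≤ L * ‖x - y‖)
    (h : ℝ) (hh : 0 < h) (hhL : h ≤ 1 / Real.sqrt L)
    (xk : EuclideanSpace ℝ (Fin d))
    (X Y : ℝ → EuclideanSpace ℝ (Fin d))
    (hX0 : X 0 = xk) (hY0 : Y 0 = 0)
    (hX : ∀ t, HasDerivAt X (Y t) t)
    (hY : ∀ t, HasDerivAt Y (-gradient f (X t)) t) :
    f (X h) ≤ f xk - h ^ 2 / 4 * ‖gradient f xk‖ ^ 2 := by
  have hsL : 0 < Real.sqrt L := Real.sqrt_pos.2 hLpos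
  set sL := Real.sqrt L with hsLdef
  have hL2 : sL ^ 2 = L := Real.sq_sqrt hLpos.le
  have hu1 : sL * h ≤ 1 := by
    rw [le_div_iff₀ hsL] at hhL; linarith
  have hu0 : 0 ≤ sL * h := by positivity
  set g := gradient f xk with hgdef
  set G := ‖g‖ with hGdef
  have hGnn : 0 ≤ G := norm_nonneg _
  have hgc : Continuous (gradient f) := by
    have h1 : Continuous fun x => fderiv ℝ f x := hf.continuous_fderiv one_ne_zero
    exact (toDual ℝ (EuclideanSpace ℝ (Fin d))).symm.continuous.comp h1
  have hXc : Continuous X := continuous_iff_continuousAt.2 fun t => (hX t).continuousAt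
  have hYc : Continuous Y := continuous_iff_continuousAt.2 fun t => (hY t).continuousAt
  have hfXc : Continuous fun s => gradient f (X s) := hgc.comp hXc
  have energy : f (X h) + ‖Y h‖ ^ 2 / 2 = f xk := by
    have := energy_aux hf hX hY h
    rw [hX0, hY0] at this
    simpa using this
  have hXB := gronwall_aux hLpos hL hX0 hY0 hX hY hu1
  have hYB1 : ∀ t ∈ Icc (0:ℝ) h, ‖Y t + t • g‖ ≤ 17/18 * (G * sL) * t ^ 2 := by
    intro t ht
    rw [hident_aux hY0 hY hfXc g t]
    have hb : ∀ s ∈ Icc (0:ℝ) t, ‖g - gradient f (X s)‖ ≤ (17/9 * (G * sL)) * s ^ 1 := by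
      intro s hs
      have hs' : s ∈ Icc (0:ℝ) h := ⟨hs.1, hs.2.trans ht.2⟩
      have h1 : ‖g - gradient f (X s)‖ = ‖gradient f (X s) - g‖ := norm_sub_rev _ _
      have h2 : ‖gradient f (X s) - g‖ ≤ L * ‖X s - xk‖ := hL (X s) xk
      have h3 := hXB s hs'
      have h4 : L * ‖X s - xk‖ = sL * (sL * ‖X s - xk‖) := by rw [← hL2]; ring
      have h5 : (17/9 * (G * sL)) * s ^ 1 = sL * (17/9 * G * s) := by ring
      rw [h1, h5]
      refine h2.trans (h4.trans_le ?_)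
      exact mul_le_mul_of_nonneg_left h3 hsL.le
    have := norm_int_le_pow ht.1 (continuous_const.sub hfXc) hb
    refine this.trans_eq ?_
    norm_num; ring
  have hXB2 : ∀ t ∈ Icc (0:ℝ) h, ‖X t - xk + (t ^ 2 / 2) • g‖ ≤ 17/54 * (G * sL) * t ^ 3 := by
    intro t ht
    rw [xident_aux hX0 hX (fun t => (hY t).continuousAt) g t]
    have hb : ∀ s ∈ Icc (0:ℝ) t, ‖Y s + s • g‖ ≤ (17/18 * (G * sL)) * s ^ 2 := fun s hs =>
      hYB1 s ⟨hs.1, hs.2.trans ht.2⟩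
    have := norm_int_le_pow ht.1 (hYc.add (continuous_id.smul continuous_const)) hb
    refine this.trans_eq ?_
    norm_num; ring
  have hYB2 : ‖Y h + h • g‖ ≤ 53/216 * (h * G) := by
    rw [hident_aux hY0 hY hfXc g h]
    have c2 : 0 ≤ G / 2 * L := by positivity
    have hb1 : ∀ s ∈ Icc (0:ℝ) h, ‖g - gradient f (X s)‖ ≤
        L * (G / 2 * s ^ 2 + 17/54 * (G * sL) * s ^ 3) := by
      intro s hs
      have h1 : ‖g - gradient f (X s)‖ = ‖gradient f (X s) - g‖ := norm_sub_rev _ _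
      have h2 : ‖gradient f (X s) - g‖ ≤ L * ‖X s - xk‖ := hL (X s) xk
      have h3 : ‖X s - xk‖ ≤ ‖X s - xk + (s ^ 2 / 2) • g‖ + ‖(s ^ 2 / 2) • g‖ :=
        norm_le_add_norm_add _ _
      have h4 : ‖(s ^ 2 / 2) • g‖ = s ^ 2 / 2 * G := by
        rw [norm_smul, Real.norm_eq_abs, abs_of_nonneg (by positivity)]
      have h5 := hXB2 s hs
      rw [h1]
      refine h2.trans (mul_le_mul_of_nonneg_left ?_ hLpos.le)
      rw [h4] at h3
      linarith
    have key := norm_int_le_pow2 (m := 2) (n := 3) (φ := fun s => g - gradient f (X s))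
      hh.le (continuous_const.sub hfXc)
      (c := L * (G / 2)) (c' := L * (17/54 * (G * sL))) (fun s hs => by
        have := hb1 s hs; linarith)
    refine key.trans ?_
    have e1 : L * (G / 2) * h ^ (2 + 1) / (((2:ℕ):ℝ) + 1) = (sL * h) ^ 2 / 6 * (h * G) := by
      rw [← hL2]; push_cast; ring
    have e2 : L * (17/54 * (G * sL)) * h ^ (3 + 1) / (((3:ℕ):ℝ) + 1)
        = 17/216 * (sL * h) ^ 3 * (h * G) := by
      rw [← hL2]; push_cast; ring
    rw [e1, e2]
    have hp : 0 ≤ h * G := by positivity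
    have q2 : (sL * h) ^ 2 ≤ 1 := pow_le_one₀ hu0 hu1
    have q3 : (sL * h) ^ 3 ≤ 1 := pow_le_one₀ hu0 hu1
    nlinarith
  have hYlow : 163/216 * (h * G) ≤ ‖Y h‖ := by
    have h1 : ‖h • g‖ = h * G := by
      rw [norm_smul, Real.norm_eq_abs, abs_of_pos hh]
    have h2 : ‖h • g‖ ≤ ‖Y h + h • g‖ + ‖Y h‖ := by
      have := norm_le_add_norm_add (h • g) (Y h)
      rwa [add_comm (h • g) (Y h)] at this
    rw [h1] at h2
    linarith
  have hsq : (163/216 * (h * G)) ^ 2 ≤ ‖Y h‖ ^ 2 :=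
    pow_le_pow_left₀ (by positivity) hYlow 2
  nlinarith [sq_nonneg (h * G), energy]
end

section
/- For a quadratic f(x) = ½ xᵀAx with αI ⪯ A ⪯ LI, the HF-opt algorithm with fixed integration time h ≤ 1/(2√L) satisfies ‖x_k - x*‖² ≤ (1 - αh²/2)^k ‖x_0 - x*‖². -/
open scoped RealInnerProductSpace

/-- The cosine of a continuous linear operator, defined by its power series. -/
noncomputable def opCos {E : Type*} [NormedAddCommGroup E] [NormedSpace ℝ E]
    (B : E →L[ℝ] E) : E →L[ℝ] E :=
  ∑' n : ℕ, ((-1 : ℝ) ^ n / (2 * n).factorial) • B ^ (2 * n)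

lemma aux_cos_sq {s : ℝ} (hs0 : 0 < s) (hs : s ≤ 1 / 2) :
    Real.cos s ^ 2 ≤ 1 - s ^ 2 / 2 := by
  have h4 : s ^ 2 ≤ 1 / 4 := by nlinarith
  have h2 : 0 ≤ s - s ^ 3 / 4 := by nlinarith
  have h1 : s - s ^ 3 / 4 < Real.sin s := by
    nlinarith [Real.sin_gt_sub_cube hs0, pow_pos hs0 3]
  have h5 : (s - s ^ 3 / 4) ^ 2 ≤ Real.sin s ^ 2 := by nlinarith
  have h6 : s ^ 4 ≤ s ^ 2 / 4 := by nlinarith [sq_nonneg s]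
  have h3 := Real.sin_sq_add_cos_sq s
  nlinarith [mul_nonneg (mul_nonneg (sq_nonneg s) (sq_nonneg s)) (sq_nonneg s)]

section opstuff
variable {E : Type*} [NormedAddCommGroup E] [InnerProductSpace ℝ E] [CompleteSpace E]

lemma aux_summable (B : E →L[ℝ] E) :
    Summable fun n : ℕ => ((-1 : ℝ) ^ n / (2 * n).factorial) • B ^ (2 * n) := by
  apply Summable.of_norm
  apply Summable.of_nonneg_of_le (fun n => norm_nonneg _)
    (fun n => ?_) (Real.summable_pow_div_factorial (‖B‖ ^ 2))
  have h1 : ‖((-1 : ℝ) ^ n / (2 * n).factorial) • B ^ (2 * n)‖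
      ≤ ‖((-1 : ℝ) ^ n / (2 * n).factorial)‖ * ‖B ^ (2 * n)‖ :=
    ContinuousLinearMap.opNorm_smul_le _ _
  have h2 : ‖B ^ (2 * n)‖ ≤ ‖B‖ ^ (2 * n) := by
    cases n with
    | zero => simp only [mul_zero, pow_zero]; exact ContinuousLinearMap.norm_id_le
    | succ m => exact norm_pow_le' B (by positivity)
  have h3 : ‖((-1 : ℝ) ^ n / (2 * n).factorial)‖ = 1 / (2 * n).factorial := by
    rw [Real.norm_eq_abs, abs_div, abs_pow, abs_neg, abs_one, one_pow, Nat.abs_cast]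
  have h4 : (1 : ℝ) / (2 * n).factorial ≤ 1 / n.factorial := by
    gcongr
    omega
  have h6 : ‖B‖ ^ (2 * n) = (‖B‖ ^ 2) ^ n := by rw [pow_mul]
  calc ‖((-1 : ℝ) ^ n / (2 * n).factorial) • B ^ (2 * n)‖
      ≤ (1 / (2 * n).factorial) * ‖B‖ ^ (2 * n) := by
        rw [← h3]; exact h1.trans (by gcongr)
    _ ≤ (1 / n.factorial) * (‖B‖ ^ 2) ^ n := by rw [← h6]; gcongr
    _ = (‖B‖ ^ 2) ^ n / (n.factorial : ℝ) := by ring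

lemma aux_hasSum_apply (B : E →L[ℝ] E) (v : E) :
    HasSum (fun n : ℕ => ((-1 : ℝ) ^ n / (2 * n).factorial) • (B ^ (2 * n)) v)
      (opCos B v) := by
  have := (aux_summable B).hasSum.mapL (ContinuousLinearMap.apply ℝ E v)
  simpa [opCos, Function.comp] using this

end opstuff

/-- For a quadratic `f(x) = ½⟨Ax, x⟩` with `αI ⪯ A ⪯ LI` (minimizer `x* = 0`),
HF-opt with fixed integration time `h ≤ 1/(2√L)`, whose exact flow gives the recursion
`x_{k+1} = cos(h√A) x_k`, satisfies `‖x_k - x*‖² ≤ (1 - αh²/2)^k ‖x_0 - x*‖²`. -/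
theorem hf_opt_quadratic_rate {d : ℕ}
    (α L h : ℝ) (hα : 0 < α) (hαL : α ≤ L)
    (hh : 0 < h) (hhL : h ≤ 1 / (2 * Real.sqrt L))
    (A sqrtA : EuclideanSpace ℝ (Fin d) →L[ℝ] EuclideanSpace ℝ (Fin d))
    (hsym : ∀ u v, (inner ℝ (A u) v : ℝ) = inner ℝ u (A v))
    (hlow : ∀ v : EuclideanSpace ℝ (Fin d), α * ‖v‖ ^ 2 ≤ (inner ℝ (A v) v : ℝ))
    (hup : ∀ v : EuclideanSpace ℝ (Fin d), (inner ℝ (A v) v : ℝ) ≤ L * ‖v‖ ^ 2)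
    (hssym : ∀ u v, (inner ℝ (sqrtA u) v : ℝ) = inner ℝ u (sqrtA v))
    (hspsd : ∀ v : EuclideanSpace ℝ (Fin d), 0 ≤ (inner ℝ (sqrtA v) v : ℝ))
    (hsq : sqrtA ∘L sqrtA = A)
    (x : ℕ → EuclideanSpace ℝ (Fin d)) (xstar : EuclideanSpace ℝ (Fin d)) (hstar : xstar = 0)
    (hstep : ∀ k, x (k + 1) = opCos (h • sqrtA) (x k)) :
    ∀ k, ‖x k - xstar‖ ^ 2 ≤ (1 - α * h ^ 2 / 2) ^ k * ‖x 0 - xstar‖ ^ 2 := by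
  subst hstar
  have hLpos : 0 < L := lt_of_lt_of_le hα hαL
  have hsL : 0 < Real.sqrt L := Real.sqrt_pos.mpr hLpos
  have hh2 : h ^ 2 ≤ 1 / (4 * L) := by
    have h1 : h ^ 2 ≤ (1 / (2 * Real.sqrt L)) ^ 2 := by
      apply pow_le_pow_left₀ hh.le hhL
    calc h ^ 2 ≤ (1 / (2 * Real.sqrt L)) ^ 2 := h1
      _ = 1 / (4 * L) := by
        rw [div_pow, mul_pow, Real.sq_sqrt hLpos.le]; norm_num
  have hc0 : 0 ≤ 1 - α * h ^ 2 / 2 := by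
    have h2 : α * h ^ 2 ≤ 1 / 4 := by
      calc α * h ^ 2 ≤ L * h ^ 2 := mul_le_mul_of_nonneg_right hαL (sq_nonneg h)
        _ ≤ L * (1 / (4 * L)) := mul_le_mul_of_nonneg_left hh2 hLpos.le
        _ = 1 / 4 := by field_simp
    linarith
  -- the symmetric linear map and its eigenbasis
  have hsymL : (↑sqrtA : EuclideanSpace ℝ (Fin d) →ₗ[ℝ] EuclideanSpace ℝ (Fin d)).IsSymmetric :=
    fun u v => by simpa using hssym u v
  have hd : Module.finrank ℝ (EuclideanSpace ℝ (Fin d)) = d := finrank_euclideanSpace_fin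
  set b := hsymL.eigenvectorBasis hd with hbdef
  set μ := hsymL.eigenvalues hd with hμdef
  have heig : ∀ i, sqrtA (b i) = μ i • b i := fun i => by
    have h1 := hsymL.apply_eigenvectorBasis hd i
    exact_mod_cast h1
  have hnorm : ∀ i, ‖b i‖ = 1 := fun i => b.orthonormal.1 i
  have hbi : ∀ i, ⟪b i, b i⟫ = (1 : ℝ) := fun i => by
    rw [real_inner_self_eq_norm_sq, hnorm i]; norm_num
  have hμ0 : ∀ i, 0 ≤ μ i := fun i => by
    have h1 := hspsd (b i)
    rw [heig i, real_inner_smul_left, hbi i, mul_one] at h1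
    exact h1
  have hA : ∀ i, A (b i) = (μ i ^ 2) • b i := fun i => by
    rw [← hsq, ContinuousLinearMap.comp_apply, heig i, map_smul, heig i, smul_smul, pow_two]
  have hμα : ∀ i, α ≤ μ i ^ 2 := fun i => by
    have h1 := hlow (b i)
    rw [hA i, real_inner_smul_left, hbi i, mul_one, hnorm i] at h1
    simpa using h1
  have hμL : ∀ i, μ i ^ 2 ≤ L := fun i => by
    have h1 := hup (b i)
    rw [hA i, real_inner_smul_left, hbi i, mul_one, hnorm i] at h1
    simpa using h1
  have hs12 : ∀ i, h * μ i ≤ 1 / 2 := fun i => by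
    have hle : μ i ≤ Real.sqrt L := by
      rw [show μ i = Real.sqrt (μ i ^ 2) from (Real.sqrt_sq (hμ0 i)).symm]
      exact Real.sqrt_le_sqrt (hμL i)
    calc h * μ i ≤ (1 / (2 * Real.sqrt L)) * Real.sqrt L :=
          mul_le_mul hhL hle (hμ0 i) (by positivity)
      _ = 1 / 2 := by field_simp
  have hs0 : ∀ i, 0 < h * μ i := fun i => by
    have hp : 0 < μ i := by nlinarith [hμα i, hμ0 i]
    positivity
  have hcos : ∀ i, Real.cos (h * μ i) ^ 2 ≤ 1 - α * h ^ 2 / 2 := fun i => by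
    have h1 := aux_cos_sq (hs0 i) (hs12 i)
    have h7 : α * h ^ 2 ≤ (h * μ i) ^ 2 := by nlinarith [hμα i, sq_nonneg h]
    linarith
  -- symmetry and eigenaction of powers of B = h • sqrtA
  have hBone : ∀ u v : EuclideanSpace ℝ (Fin d),
      ⟪(h • sqrtA) u, v⟫ = ⟪u, (h • sqrtA) v⟫ := by
    intro u v
    simp only [ContinuousLinearMap.smul_apply, real_inner_smul_left, real_inner_smul_right]
    rw [hssym]
  have hcomm : ∀ (m : ℕ) (v : EuclideanSpace ℝ (Fin d)),
      (h • sqrtA) (((h • sqrtA) ^ m) v) = ((h • sqrtA) ^ m) ((h • sqrtA) v) := by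
    intro m v
    rw [← ContinuousLinearMap.mul_apply, ← ContinuousLinearMap.mul_apply, ← pow_succ',
      ← pow_succ]
  have hpowsym : ∀ m : ℕ, ∀ u v : EuclideanSpace ℝ (Fin d),
      ⟪((h • sqrtA) ^ m) u, v⟫ = ⟪u, ((h • sqrtA) ^ m) v⟫ := by
    intro m
    induction m with
    | zero => simp
    | succ k ih =>
      intro u v
      rw [pow_succ, ContinuousLinearMap.mul_apply, ContinuousLinearMap.mul_apply,
        ih ((h • sqrtA) u) v, hBone, hcomm]
  have hBeig : ∀ i, (h • sqrtA) (b i) = (h * μ i) • b i := fun i => by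
    rw [ContinuousLinearMap.smul_apply, heig i, smul_smul]
  have hpoweig : ∀ m : ℕ, ∀ i, ((h • sqrtA) ^ m) (b i) = ((h * μ i) ^ m) • b i := by
    intro m
    induction m with
    | zero => simp
    | succ k ih =>
      intro i
      rw [pow_succ, ContinuousLinearMap.mul_apply, hBeig i, map_smul, ih i, smul_smul,
        pow_succ, mul_comm]
  -- the action of opCos on inner products with the eigenbasis
  have hTb : ∀ (v : EuclideanSpace ℝ (Fin d)) i,
      ⟪b i, opCos (h • sqrtA) v⟫ = Real.cos (h * μ i) * ⟪b i, v⟫ := by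
    intro v i
    have h1 := (aux_hasSum_apply (h • sqrtA) v).mapL (innerSL ℝ (b i))
    have h2 : ∀ n : ℕ,
        (innerSL ℝ (b i)) (((-1 : ℝ) ^ n / (2 * n).factorial) • ((h • sqrtA) ^ (2 * n)) v)
        = (-1 : ℝ) ^ n * (h * μ i) ^ (2 * n) / (2 * n).factorial * ⟪b i, v⟫ := by
      intro n
      simp only [innerSL_apply_apply, ContinuousLinearMap.smul_apply, real_inner_smul_right]
      rw [← hpowsym (2 * n), hpoweig (2 * n) i, real_inner_smul_left]
      ring
    have h3 : HasSum
        (fun n : ℕ => (-1 : ℝ) ^ n * (h * μ i) ^ (2 * n) / (2 * n).factorial * ⟪b i, v⟫)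
        (Real.cos (h * μ i) * ⟪b i, v⟫) := (Real.hasSum_cos (h * μ i)).mul_right _
    have h4 : HasSum
        (fun n : ℕ => (-1 : ℝ) ^ n * (h * μ i) ^ (2 * n) / (2 * n).factorial * ⟪b i, v⟫)
        ((innerSL ℝ (b i)) (opCos (h • sqrtA) v)) := by
      simpa only [h2] using h1
    have := h4.unique h3
    simpa using this
  -- the contraction property
  have key : ∀ v : EuclideanSpace ℝ (Fin d),
      ‖opCos (h • sqrtA) v‖ ^ 2 ≤ (1 - α * h ^ 2 / 2) * ‖v‖ ^ 2 := by
    intro v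
    have e1 : ∀ w : EuclideanSpace ℝ (Fin d), ‖w‖ ^ 2 = ∑ i, ⟪b i, w⟫ ^ 2 := fun w => by
      rw [← real_inner_self_eq_norm_sq, ← b.sum_inner_mul_inner w w]
      exact Finset.sum_congr rfl fun i _ => by rw [pow_two, real_inner_comm w (b i)]
    rw [e1 (opCos (h • sqrtA) v), e1 v, Finset.mul_sum]
    apply Finset.sum_le_sum
    intro i _
    rw [hTb v i, mul_pow]
    have h1 := hcos i
    nlinarith [sq_nonneg (⟪b i, v⟫ : ℝ), sq_nonneg (Real.cos (h * μ i))]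
  -- conclude by induction
  intro k
  induction k with
  | zero => simp
  | succ k ih =>
    calc ‖x (k + 1) - 0‖ ^ 2 = ‖opCos (h • sqrtA) (x k)‖ ^ 2 := by rw [hstep k, sub_zero]
      _ ≤ (1 - α * h ^ 2 / 2) * ‖x k‖ ^ 2 := key _
      _ = (1 - α * h ^ 2 / 2) * ‖x k - 0‖ ^ 2 := by rw [sub_zero]
      _ ≤ (1 - α * h ^ 2 / 2) * ((1 - α * h ^ 2 / 2) ^ k * ‖x 0 - 0‖ ^ 2) :=
          mul_le_mul_of_nonneg_left ih hc0
      _ = (1 - α * h ^ 2 / 2) ^ (k + 1) * ‖x 0 - 0‖ ^ 2 := by ring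
end

section
/- For a quadratic f(x) = ½ xᵀAx with αI ⪯ A ⪯ LI, randomized HF-opt with i.i.d. exponential integration times τ_k ~ Exp(γ) satisfies E[‖x_k - x*‖²] ≤ (1 - 2α/(γ² + 4α))^k E[‖x_0 - x*‖²]. -/
open MeasureTheory ProbabilityTheory Real Set Filter Topology RealInnerProductSpace
open scoped ENNReal NNReal

lemma opCos_summable {E : Type*} [NormedAddCommGroup E] [NormedSpace ℝ E] [CompleteSpace E]
    (B : E →L[ℝ] E) :
    Summable (fun n : ℕ => ((-1 : ℝ) ^ n / (2 * n).factorial) • B ^ (2 * n)) := by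
  have h1 : Summable (fun m : ℕ => ‖B‖ ^ m / (m.factorial : ℝ)) :=
    Real.summable_pow_div_factorial ‖B‖
  have h2 : Summable (fun n : ℕ => ‖B‖ ^ (2 * n) / ((2 * n).factorial : ℝ)) :=
    h1.comp_injective (fun a b hab => by omega)
  refine Summable.of_norm_bounded h2 (fun n => ?_)
  refine (norm_smul_le ((-1 : ℝ) ^ n / ((2 * n).factorial : ℝ)) (B ^ (2 * n))).trans ?_
  have hB : ‖B ^ (2 * n)‖ ≤ ‖B‖ ^ (2 * n) := by
    rcases Nat.eq_zero_or_pos (2 * n) with h | h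
    · rw [h, pow_zero, pow_zero]; exact ContinuousLinearMap.norm_id_le (𝕜 := ℝ) (E := E)
    · exact norm_pow_le' _ h
  have h3 : ‖((-1 : ℝ) ^ n / ((2 * n).factorial : ℝ))‖ = 1 / ((2 * n).factorial : ℝ) := by
    rw [Real.norm_eq_abs, abs_div, abs_pow, abs_neg, abs_one, one_pow, abs_of_nonneg (by positivity)]
  rw [h3, div_mul_eq_mul_div, one_mul]
  exact div_le_div_of_nonneg_right hB (by positivity)

lemma opCos_apply_eigen {E : Type*} [NormedAddCommGroup E] [NormedSpace ℝ E] [CompleteSpace E]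
    (S : E →L[ℝ] E) (t s : ℝ) (e : E) (he : S e = s • e) :
    opCos (t • S) (e) = Real.cos (t * s) • e := by
  have hpow : ∀ n : ℕ, ((t • S) ^ n) e = (t * s) ^ n • e := by
    intro n
    induction n with
    | zero => simp
    | succ n ih =>
      rw [pow_succ, ContinuousLinearMap.mul_apply, ContinuousLinearMap.smul_apply, he,
        smul_smul, _root_.map_smul, ih, smul_smul, pow_succ]
      ring_nf
  have hsum := opCos_summable (t • S)
  have := (ContinuousLinearMap.apply ℝ E e).map_tsum hsum
  rw [opCos]
  simp only [ContinuousLinearMap.apply_apply] at this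
  rw [this]
  have heq : ∀ n : ℕ, (((-1 : ℝ) ^ n / (2 * n).factorial) • (t • S) ^ (2 * n)) e
      = ((-1 : ℝ) ^ n * (t * s) ^ (2 * n) / ((2 * n).factorial : ℝ)) • e := by
    intro n
    rw [ContinuousLinearMap.smul_apply, hpow, smul_smul]
    congr 1; ring
  rw [tsum_congr heq, (Real.hasSum_cos (t * s)).summable.tsum_smul_const,
    (Real.hasSum_cos (t * s)).tsum_eq]

lemma integrableOn_exp_neg_mul_cos {γ : ℝ} (b : ℝ) (hγ : 0 < γ) :
    IntegrableOn (fun t => Real.exp (-(γ * t)) * Real.cos (b * t)) (Set.Ioi 0) := by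
  have h := exp_neg_integrableOn_Ioi 0 hγ
  refine h.mono' ?_ ?_
  · exact ((Real.continuous_exp.comp (continuous_const.mul continuous_id).neg).mul
      (Real.continuous_cos.comp (continuous_const.mul continuous_id))).aestronglyMeasurable
  · filter_upwards with t
    rw [norm_mul, norm_eq_abs, norm_eq_abs, abs_exp, neg_mul]
    calc rexp (-(γ * t)) * |Real.cos (b * t)| ≤ rexp (-(γ * t)) * 1 := by
          gcongr; exact abs_cos_le_one _
      _ = rexp (-(γ * t)) := mul_one _

lemma integral_Ioi_exp_neg_mul_cos {γ : ℝ} (b : ℝ) (hγ : 0 < γ) :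
    ∫ t in Set.Ioi (0:ℝ), Real.exp (-(γ * t)) * Real.cos (b * t) = γ / (γ ^ 2 + b ^ 2) := by
  have hden : (0:ℝ) < γ ^ 2 + b ^ 2 := by positivity
  set F : ℝ → ℝ := fun t =>
    Real.exp (-(γ * t)) * (b * Real.sin (b * t) - γ * Real.cos (b * t)) / (γ ^ 2 + b ^ 2) with hFdef
  have hF : ∀ t ∈ Ici (0:ℝ), HasDerivAt F (Real.exp (-(γ * t)) * Real.cos (b * t)) t := by
    intro t _
    have h1 : HasDerivAt (fun u : ℝ => Real.exp (-(γ * u))) (Real.exp (-(γ * t)) * (-γ)) t := by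
      have : HasDerivAt (fun u : ℝ => -(γ * u)) (-γ) t := by
        simpa using ((hasDerivAt_id t).const_mul (-γ))
      simpa using this.exp
    have hsin : HasDerivAt (fun u : ℝ => Real.sin (b * u)) (Real.cos (b * t) * b) t := by
      have : HasDerivAt (fun u : ℝ => b * u) b t := by simpa using (hasDerivAt_id t).const_mul b
      simpa using this.sin
    have hcos : HasDerivAt (fun u : ℝ => Real.cos (b * u)) (-Real.sin (b * t) * b) t := by
      have : HasDerivAt (fun u : ℝ => b * u) b t := by simpa using (hasDerivAt_id t).const_mul b
      simpa using this.cos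
    have hmain := (h1.mul ((hsin.const_mul b).sub (hcos.const_mul γ))).div_const (γ ^ 2 + b ^ 2)
    refine hmain.congr_deriv ?_
    simp only [Pi.sub_apply]
    rw [div_eq_iff hden.ne']
    ring
  have hexp : Tendsto (fun t : ℝ => Real.exp (-(γ * t))) atTop (𝓝 0) := by
    have h1 : Tendsto (fun t : ℝ => γ * t) atTop atTop :=
      Tendsto.const_mul_atTop hγ tendsto_id
    exact (Real.tendsto_exp_neg_atTop_nhds_zero).comp h1
  have hlim : Tendsto F atTop (𝓝 0) := by
    refine squeeze_zero_norm (a := fun t => ((|b| + γ) / (γ ^ 2 + b ^ 2)) * Real.exp (-(γ * t))) ?_ ?_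
    · intro t
      rw [hFdef]
      simp only [norm_eq_abs, abs_div, abs_of_pos hden, abs_mul, abs_exp]
      rw [div_mul_eq_mul_div, mul_comm (|b| + γ)]
      gcongr
      calc |b * Real.sin (b * t) - γ * Real.cos (b * t)|
          ≤ |b * Real.sin (b * t)| + |γ * Real.cos (b * t)| := abs_sub _ _
        _ ≤ |b| * 1 + γ * 1 := by
            rw [abs_mul, abs_mul, abs_of_pos hγ]
            gcongr
            exacts [abs_sin_le_one _, abs_cos_le_one _]
        _ = |b| + γ := by ring
    · simpa using hexp.const_mul ((|b| + γ) / (γ ^ 2 + b ^ 2))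
  have := integral_Ioi_of_hasDerivAt_of_tendsto' hF (integrableOn_exp_neg_mul_cos b hγ) hlim
  rw [this, hFdef]
  simp only [mul_zero, Real.sin_zero, Real.cos_zero, neg_zero, Real.exp_zero]
  field_simp
  ring

lemma integral_expMeasure_cos_sq {γ : ℝ} (hγ : 0 < γ) (s : ℝ) :
    ∫ t, Real.cos (t * s) ^ 2 ∂(expMeasure γ) = 1 - 2 * s ^ 2 / (γ ^ 2 + 4 * s ^ 2) := by
  have hpdf : ∀ x : ℝ, exponentialPDFReal γ x = if 0 ≤ x then γ * Real.exp (-(γ * x)) else 0 := by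
    intro x
    rw [exponentialPDFReal, gammaPDFReal]
    simp [Real.rpow_one, Real.Gamma_one]
  have hmeasure : expMeasure γ
      = volume.withDensity (fun x => ((exponentialPDFReal γ x).toNNReal : ℝ≥0∞)) := rfl
  have hmeas : Measurable (fun x => (exponentialPDFReal γ x).toNNReal) :=
    (measurable_exponentialPDFReal γ).real_toNNReal
  rw [hmeasure, integral_withDensity_eq_integral_smul hmeas]
  have h1 : (fun x => (exponentialPDFReal γ x).toNNReal • Real.cos (x * s) ^ 2)
      = Set.indicator (Set.Ici 0)
        (fun x => γ * (Real.exp (-(γ * x)) * Real.cos (x * s) ^ 2)) := by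
    funext x
    rw [NNReal.smul_def, Real.coe_toNNReal _ (exponentialPDFReal_nonneg hγ x), hpdf]
    by_cases hx : 0 ≤ x
    · rw [if_pos hx, Set.indicator_of_mem (Set.mem_Ici.mpr hx), smul_eq_mul]; ring
    · rw [if_neg hx, Set.indicator_of_notMem (by simpa using hx), zero_smul]
  rw [h1, integral_indicator measurableSet_Ici, integral_Ici_eq_integral_Ioi, integral_const_mul]
  have hsplit : ∀ t : ℝ, Real.exp (-(γ * t)) * Real.cos (t * s) ^ 2
      = (1/2) * (Real.exp (-(γ * t)) * Real.cos (0 * t))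
        + (1/2) * (Real.exp (-(γ * t)) * Real.cos ((2 * s) * t)) := by
    intro t
    rw [Real.cos_sq]
    have h2 : 2 * (t * s) = (2 * s) * t := by ring
    rw [h2]
    simp only [zero_mul, Real.cos_zero]
    ring
  simp only [hsplit]
  rw [integral_add ((integrableOn_exp_neg_mul_cos 0 hγ).const_mul (1/2))
      ((integrableOn_exp_neg_mul_cos (2 * s) hγ).const_mul (1/2)),
    integral_const_mul, integral_const_mul,
    integral_Ioi_exp_neg_mul_cos 0 hγ, integral_Ioi_exp_neg_mul_cos (2 * s) hγ]
  have h4 : (0:ℝ) < γ ^ 2 + 4 * s ^ 2 := by positivity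
  field_simp
  ring


section SeqFunAux

noncomputable def seqFun {E : Type*} (g : ℝ → E → E) (v0 : E) : ℕ → (ℕ → ℝ) → E
  | 0, _ => v0
  | k+1, t => g (t k) (seqFun g v0 k t)

lemma seqFun_congr {E : Type*} (g : ℝ → E → E) (v0 : E) {k : ℕ} {t t' : ℕ → ℝ}
    (h : ∀ i < k, t i = t' i) : seqFun g v0 k t = seqFun g v0 k t' := by
  induction k with
  | zero => rfl
  | succ k ih =>
    show g (t k) (seqFun g v0 k t) = g (t' k) (seqFun g v0 k t')
    rw [h k (by omega), ih (fun i hi => h i (by omega))]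

lemma measurable_seqFun {E : Type*} [MeasurableSpace E] {g : ℝ → E → E}
    (hg : Measurable (fun p : ℝ × E => g p.1 p.2)) (v0 : E) (k : ℕ) :
    Measurable (fun t : ℕ → ℝ => seqFun g v0 k t) := by
  induction k with
  | zero => exact measurable_const
  | succ k ih =>
    show Measurable fun t : ℕ → ℝ => g (t k) (seqFun g v0 k t)
    exact hg.comp ((measurable_pi_apply k).prodMk ih)

end SeqFunAux

/-- For a quadratic `f(x) = ½⟨Ax, x⟩` with `αI ⪯ A ⪯ LI` (minimizer `x* = 0`),
randomized HF-opt with i.i.d. exponential integration times `τ_k ~ Exp(γ)`, whose exact flow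
gives `x_{k+1} = cos(τ_k √A) x_k`, satisfies
`E[‖x_k - x*‖²] ≤ (1 - 2α/(γ² + 4α))^k E[‖x_0 - x*‖²]`. -/
theorem rhf_opt_quadratic_rate {d : ℕ} {Ω : Type*} [MeasurableSpace Ω]
    (P : Measure Ω) [IsProbabilityMeasure P]
    (α L γ : ℝ) (hα : 0 < α) (hαL : α ≤ L) (hγ : 0 < γ)
    (A sqrtA : EuclideanSpace ℝ (Fin d) →L[ℝ] EuclideanSpace ℝ (Fin d))
    (hsym : ∀ u v, (inner ℝ (A u) v : ℝ) = inner ℝ u (A v))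
    (hlow : ∀ v : EuclideanSpace ℝ (Fin d), α * ‖v‖ ^ 2 ≤ (inner ℝ (A v) v : ℝ))
    (hup : ∀ v : EuclideanSpace ℝ (Fin d), (inner ℝ (A v) v : ℝ) ≤ L * ‖v‖ ^ 2)
    (hssym : ∀ u v, (inner ℝ (sqrtA u) v : ℝ) = inner ℝ u (sqrtA v))
    (hspsd : ∀ v : EuclideanSpace ℝ (Fin d), 0 ≤ (inner ℝ (sqrtA v) v : ℝ))
    (hsq : sqrtA ∘L sqrtA = A)
    (τ : ℕ → Ω → ℝ) (hτm : ∀ k, Measurable (τ k))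
    (hindep : iIndepFun τ P)
    (hlaw : ∀ k, Measure.map (τ k) P = expMeasure γ)
    (x0 : EuclideanSpace ℝ (Fin d))
    (x : ℕ → Ω → EuclideanSpace ℝ (Fin d))
    (hx0 : ∀ ω, x 0 ω = x0)
    (hstep : ∀ k ω, x (k + 1) ω = opCos (τ k ω • sqrtA) (x k ω))
    (xstar : EuclideanSpace ℝ (Fin d)) (hstar : xstar = 0) :
    ∀ k, ∫ ω, ‖x k ω - xstar‖ ^ 2 ∂P ≤
      (1 - 2 * α / (γ ^ 2 + 4 * α)) ^ k * ∫ ω, ‖x 0 ω - xstar‖ ^ 2 ∂P := by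
  subst hstar
  simp only [sub_zero]
  have hfr : Module.finrank ℝ (EuclideanSpace ℝ (Fin d)) = d := finrank_euclideanSpace_fin
  have hS : (sqrtA : EuclideanSpace ℝ (Fin d) →ₗ[ℝ] EuclideanSpace ℝ (Fin d)).IsSymmetric :=
    fun u v => hssym u v
  set b := hS.eigenvectorBasis hfr with hbdef
  set μ := hS.eigenvalues hfr with hμdef
  have hb : ∀ i, sqrtA (b i) = μ i • b i := fun i => hS.apply_eigenvectorBasis hfr i
  have hone : ∀ i, ‖b i‖ = 1 := fun i => b.orthonormal.1 i
  have hite : ∀ i j, (⟪b i, b j⟫) = if i = j then 1 else 0 :=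
    fun i j => orthonormal_iff_ite.mp b.orthonormal i j
  have hμsq : ∀ i, α ≤ μ i ^ 2 := by
    intro i
    have h2 : A (b i) = (μ i ^ 2) • b i := by
      rw [← hsq, ContinuousLinearMap.comp_apply, hb, _root_.map_smul, hb, smul_smul, sq]
    have h3 : (inner ℝ (A (b i)) (b i) : ℝ) = μ i ^ 2 := by
      rw [h2, real_inner_smul_left, real_inner_self_eq_norm_sq, hone, one_pow, mul_one]
    have h1 := hlow (b i)
    rw [h3, hone, one_pow, mul_one] at h1
    exact h1
  have hρ0 : 0 ≤ 1 - 2 * α / (γ ^ 2 + 4 * α) := by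
    rw [sub_nonneg, div_le_one (by positivity)]
    nlinarith
  -- Parseval
  have hpars : ∀ v : EuclideanSpace ℝ (Fin d), ∑ i, (⟪b i, v⟫) ^ 2 = ‖v‖ ^ 2 := by
    intro v
    have h1 : ‖v‖ = ‖b.repr v‖ := (b.repr.norm_map v).symm
    rw [h1, EuclideanSpace.norm_eq, Real.sq_sqrt (by positivity)]
    refine (Finset.sum_congr rfl fun i _ => ?_).symm
    rw [b.repr_apply_apply, Real.norm_eq_abs, sq_abs]
  have hcoef : ∀ (c : Fin d → ℝ) (j : Fin d), (⟪b j, ∑ i, c i • b i⟫) = c j := by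
    intro c j
    rw [inner_sum]
    simp only [real_inner_smul_right, hite, mul_ite, mul_one, mul_zero]
    simp
  have hnorm : ∀ c : Fin d → ℝ, ‖∑ i, c i • b i‖ ^ 2 = ∑ i, c i ^ 2 := by
    intro c
    rw [← hpars (∑ i, c i • b i)]
    exact Finset.sum_congr rfl fun j _ => by rw [hcoef]
  -- the explicit formula for opCos (t • sqrtA)
  have hcosformula : ∀ (t : ℝ) (v : EuclideanSpace ℝ (Fin d)),
      opCos (t • sqrtA) v = ∑ i, (Real.cos (t * μ i) * ⟪b i, v⟫) • b i := by
    intro t v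
    conv_lhs => rw [← b.sum_repr' v, map_sum]
    refine Finset.sum_congr rfl fun i _ => ?_
    rw [_root_.map_smul, opCos_apply_eigen sqrtA t (μ i) (b i) (hb i), smul_smul, mul_comm]
  set g : ℝ → EuclideanSpace ℝ (Fin d) → EuclideanSpace ℝ (Fin d) :=
    fun t v => ∑ i, (Real.cos (t * μ i) * ⟪b i, v⟫) • b i with hgdef
  have hgcont : Continuous fun p : ℝ × EuclideanSpace ℝ (Fin d) => g p.1 p.2 := by
    apply continuous_finset_sum
    intro i _
    exact ((Real.continuous_cos.comp (continuous_fst.mul continuous_const)).mul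
      (Continuous.inner continuous_const continuous_snd)).smul continuous_const
  have hxrep : ∀ k ω, x k ω = seqFun g x0 k (fun i => τ i ω) := by
    intro k
    induction k with
    | zero => intro ω; rw [hx0]; rfl
    | succ k ih =>
      intro ω
      show x (k + 1) ω = g (τ k ω) (seqFun g x0 k fun i => τ i ω)
      rw [hstep, hcosformula, ← ih ω]
  have hxm : ∀ k, Measurable (x k) := by
    intro k
    have h1 := (measurable_seqFun hgcont.measurable x0 k).comp
      (measurable_pi_lambda (fun ω i => τ i ω) hτm)
    have h2 : x k = fun ω => seqFun g x0 k fun i => τ i ω := funext (hxrep k)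
    rw [h2]; exact h1
  have hindepk : ∀ k, IndepFun (x k) (τ k) P := by
    intro k
    have hdisj : Disjoint (Finset.range k) ({k} : Finset ℕ) := by simp
    have h := hindep.indepFun_finset (Finset.range k) {k} hdisj hτm
    set F : ({i // i ∈ Finset.range k} → ℝ) → EuclideanSpace ℝ (Fin d) :=
      fun p => seqFun g x0 k (fun i => if h : i ∈ Finset.range k then p ⟨i, h⟩ else 0) with hF
    have hFm : Measurable F := by
      refine (measurable_seqFun hgcont.measurable x0 k).comp
        (measurable_pi_lambda _ (fun i => ?_))
      by_cases hi : i ∈ Finset.range k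
      · simpa [hi] using measurable_pi_apply (⟨i, hi⟩ : {i // i ∈ Finset.range k})
      · simpa [hi] using (measurable_const : Measurable fun _ :
          ({i // i ∈ Finset.range k} → ℝ) => (0:ℝ))
    set G : ({i // i ∈ ({k} : Finset ℕ)} → ℝ) → ℝ :=
      fun p => p ⟨k, Finset.mem_singleton_self k⟩ with hG
    have hGm : Measurable G := measurable_pi_apply _
    have h2 := h.comp hFm hGm
    have e1 : (F ∘ fun a (i : Finset.range k) => τ i a) = x k := by
      funext ω
      show seqFun g x0 k (fun i => if h : i ∈ Finset.range k then τ i ω else 0)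
        = x k ω
      rw [hxrep k ω]
      exact seqFun_congr g x0 (fun i hi => by simp [Finset.mem_range.mpr hi])
    have e2 : (G ∘ fun a (i : ({k} : Finset ℕ)) => τ i a) = τ k := rfl
    rw [e1, e2] at h2
    exact h2
  -- pointwise norm formula and boundedness
  have hnormeq : ∀ k ω, ‖x (k+1) ω‖ ^ 2
      = ∑ i, Real.cos (τ k ω * μ i) ^ 2 * (⟪b i, x k ω⟫) ^ 2 := by
    intro k ω
    rw [hstep, hcosformula, hnorm]
    exact Finset.sum_congr rfl fun i _ => (mul_pow _ _ 2)
  have hxb : ∀ k ω, ‖x k ω‖ ^ 2 ≤ ‖x0‖ ^ 2 := by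
    intro k
    induction k with
    | zero => intro ω; rw [hx0]
    | succ k ih =>
      intro ω
      rw [hnormeq]
      calc ∑ i, Real.cos (τ k ω * μ i) ^ 2 * (⟪b i, x k ω⟫) ^ 2
          ≤ ∑ i, (⟪b i, x k ω⟫) ^ 2 := by
            refine Finset.sum_le_sum fun i _ => ?_
            have h1 : Real.cos (τ k ω * μ i) ^ 2 ≤ 1 := by
              nlinarith [Real.neg_one_le_cos (τ k ω * μ i), Real.cos_le_one (τ k ω * μ i)]
            nlinarith [sq_nonneg (⟪b i, x k ω⟫)]
        _ = ‖x k ω‖ ^ 2 := hpars _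
        _ ≤ ‖x0‖ ^ 2 := ih ω
  have hinner_bdd : ∀ (i : Fin d) k ω, (⟪b i, x k ω⟫) ^ 2 ≤ ‖x0‖ ^ 2 := by
    intro i k ω
    have h1 : |(⟪b i, x k ω⟫)| ≤ ‖b i‖ * ‖x k ω‖ := abs_real_inner_le_norm _ _
    rw [hone, one_mul] at h1
    have h3 := hxb k ω
    have h2 : (⟪b i, x k ω⟫) ^ 2 ≤ ‖x k ω‖ ^ 2 := by
      rw [← sq_abs]
      exact pow_le_pow_left₀ (abs_nonneg _) h1 2
    linarith
  -- integrability
  have hinnm : ∀ (i : Fin d) k, Measurable fun ω => (⟪b i, x k ω⟫) ^ 2 := by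
    intro i k
    exact (((Continuous.inner continuous_const continuous_id).measurable.comp (hxm k)).pow_const 2)
  have hcosm : ∀ (i : Fin d) k, Measurable fun ω => Real.cos (τ k ω * μ i) ^ 2 :=
    fun i k => ((Real.measurable_cos.comp ((hτm k).mul_const (μ i))).pow_const 2)
  have hcos_bdd : ∀ (t : ℝ) (s : ℝ), Real.cos (t * s) ^ 2 ≤ 1 := by
    intro t s
    nlinarith [Real.neg_one_le_cos (t * s), Real.cos_le_one (t * s)]
  have hintc : ∀ (i : Fin d) k, Integrable (fun ω => (⟪b i, x k ω⟫) ^ 2) P := by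
    intro i k
    refine (integrable_const (‖x0‖ ^ 2)).mono' (hinnm i k).aestronglyMeasurable
      (ae_of_all _ fun ω => ?_)
    rw [Real.norm_eq_abs, abs_of_nonneg (sq_nonneg _)]
    exact hinner_bdd i k ω
  have hintf : ∀ (i : Fin d) k, Integrable (fun ω => Real.cos (τ k ω * μ i) ^ 2) P := by
    intro i k
    refine (integrable_const (1:ℝ)).mono' (hcosm i k).aestronglyMeasurable
      (ae_of_all _ fun ω => ?_)
    rw [Real.norm_eq_abs, abs_of_nonneg (sq_nonneg _)]
    exact hcos_bdd _ _
  have hintprod : ∀ (i : Fin d) k,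
      Integrable (fun ω => Real.cos (τ k ω * μ i) ^ 2 * (⟪b i, x k ω⟫) ^ 2) P := by
    intro i k
    refine (integrable_const (‖x0‖ ^ 2)).mono'
      (((hcosm i k).mul (hinnm i k)).aestronglyMeasurable) (ae_of_all _ fun ω => ?_)
    rw [Real.norm_eq_abs, abs_of_nonneg (by positivity)]
    calc Real.cos (τ k ω * μ i) ^ 2 * (⟪b i, x k ω⟫) ^ 2
        ≤ 1 * (⟪b i, x k ω⟫) ^ 2 := by
          exact mul_le_mul_of_nonneg_right (hcos_bdd _ _) (sq_nonneg _)
      _ ≤ ‖x0‖ ^ 2 := by rw [one_mul]; exact hinner_bdd i k ω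
  -- the expected value of the cosine squared factor
  have hExpCos : ∀ (i : Fin d) k, ∫ ω, Real.cos (τ k ω * μ i) ^ 2 ∂P
      ≤ 1 - 2 * α / (γ ^ 2 + 4 * α) := by
    intro i k
    have hmap : ∫ ω, Real.cos (τ k ω * μ i) ^ 2 ∂P
        = ∫ t, Real.cos (t * μ i) ^ 2 ∂(expMeasure γ) := by
      rw [← hlaw k]
      exact (integral_map (hτm k).aemeasurable
        (((Real.continuous_cos.comp (continuous_id.mul continuous_const)).pow 2).aestronglyMeasurable)).symm
    rw [hmap, integral_expMeasure_cos_sq hγ]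
    have h1 : 2 * α / (γ ^ 2 + 4 * α) ≤ 2 * μ i ^ 2 / (γ ^ 2 + 4 * μ i ^ 2) := by
      rw [div_le_div_iff₀ (by positivity) (by positivity)]
      nlinarith [hμsq i]
    linarith
  -- the one-step contraction
  have hstepI : ∀ k, ∫ ω, ‖x (k+1) ω‖ ^ 2 ∂P
      ≤ (1 - 2 * α / (γ ^ 2 + 4 * α)) * ∫ ω, ‖x k ω‖ ^ 2 ∂P := by
    intro k
    have h1 : ∫ ω, ‖x (k+1) ω‖ ^ 2 ∂P
        = ∑ i, ∫ ω, Real.cos (τ k ω * μ i) ^ 2 * (⟪b i, x k ω⟫) ^ 2 ∂P := by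
      rw [← integral_finset_sum _ (fun i _ => hintprod i k)]
      exact integral_congr_ae (ae_of_all _ fun ω => hnormeq k ω)
    have h2 : ∀ i : Fin d, ∫ ω, Real.cos (τ k ω * μ i) ^ 2 * (⟪b i, x k ω⟫) ^ 2 ∂P
        = (∫ ω, Real.cos (τ k ω * μ i) ^ 2 ∂P) * ∫ ω, (⟪b i, x k ω⟫) ^ 2 ∂P := by
      intro i
      have hind : IndepFun (fun ω => Real.cos (τ k ω * μ i) ^ 2)
          (fun ω => (⟪b i, x k ω⟫) ^ 2) P := by
        have hψ : Measurable fun t : ℝ => Real.cos (t * μ i) ^ 2 :=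
          ((Real.continuous_cos.comp (continuous_id.mul continuous_const)).pow 2).measurable
        have hφ : Measurable fun v : EuclideanSpace ℝ (Fin d) => (⟪b i, v⟫) ^ 2 :=
          (((Continuous.inner continuous_const continuous_id).pow 2)).measurable
        exact (hindepk k).symm.comp hψ hφ
      exact hind.integral_fun_mul_eq_mul_integral (hintf i k).aestronglyMeasurable (hintc i k).aestronglyMeasurable
    rw [h1]
    calc ∑ i, ∫ ω, Real.cos (τ k ω * μ i) ^ 2 * (⟪b i, x k ω⟫) ^ 2 ∂P
        ≤ ∑ i, (1 - 2 * α / (γ ^ 2 + 4 * α)) * ∫ ω, (⟪b i, x k ω⟫) ^ 2 ∂P := by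
          refine Finset.sum_le_sum fun i _ => ?_
          rw [h2 i]
          exact mul_le_mul_of_nonneg_right (hExpCos i k)
            (integral_nonneg fun ω => sq_nonneg _)
      _ = (1 - 2 * α / (γ ^ 2 + 4 * α)) * ∫ ω, ‖x k ω‖ ^ 2 ∂P := by
          rw [← Finset.mul_sum, ← integral_finset_sum _ (fun i _ => hintc i k)]
          congr 1
          exact integral_congr_ae (ae_of_all _ fun ω => hpars (x k ω))
  -- final induction
  intro k
  induction k with
  | zero => simp
  | succ k ih =>
    calc ∫ ω, ‖x (k+1) ω‖ ^ 2 ∂P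
        ≤ (1 - 2 * α / (γ ^ 2 + 4 * α)) * ∫ ω, ‖x k ω‖ ^ 2 ∂P := hstepI k
      _ ≤ (1 - 2 * α / (γ ^ 2 + 4 * α)) *
          ((1 - 2 * α / (γ ^ 2 + 4 * α)) ^ k * ∫ ω, ‖x 0 ω‖ ^ 2 ∂P) :=
          mul_le_mul_of_nonneg_left ih hρ0
      _ = (1 - 2 * α / (γ ^ 2 + 4 * α)) ^ (k+1) * ∫ ω, ‖x 0 ω‖ ^ 2 ∂P := by ring
end

section
/- Along the accelerated gradient flow Ẍ_t + (3/t)Ẋ_t + ∇f(X_t) = 0 for a convex function f, the Lyapunov function E_t = t²(f(X_t) - f(x*)) + 2‖X_t + (t/2)Ẋ_t - x*‖² is non-increasing, hence f(X_t) - f(x*) ≤ 2‖X_0 - x*‖²/t². -/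
open RealInnerProductSpace Filter Set

lemma convex_first_order {d : ℕ} {f : EuclideanSpace ℝ (Fin d) → ℝ}
    (hconv : ConvexOn ℝ Set.univ f) {x y g : EuclideanSpace ℝ (Fin d)}
    (hg : HasGradientAt f g x) : ⟪g, y - x⟫ ≤ f y - f x := by
  have hF : HasFDerivAt f (InnerProductSpace.toDual ℝ _ g) x :=
    hasGradientAt_iff_hasFDerivAt.mp hg
  have hc : HasDerivAt (fun s : ℝ => x + s • (y - x)) (y - x) 0 := by
    simpa using ((hasDerivAt_id (0 : ℝ)).smul_const (y - x)).const_add x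
  have hφ : HasDerivAt (fun s : ℝ => f (x + s • (y - x))) ⟪g, y - x⟫ 0 := by
    have hF0 : HasFDerivAt f (InnerProductSpace.toDual ℝ _ g)
        ((fun s : ℝ => x + s • (y - x)) 0) := by simpa using hF
    have h := hF0.comp_hasDerivAt 0 hc; simp [InnerProductSpace.toDual_apply_apply] at h; exact h
  have hφconv : ConvexOn ℝ Set.univ (fun s : ℝ => f (x + s • (y - x))) := by
    have := hconv.comp_affineMap (AffineMap.lineMap x y)
    simp only [Set.preimage_univ] at this
    rw [show (fun s : ℝ => f (x + s • (y - x))) = f ∘ AffineMap.lineMap x y from ?_]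
    · exact this
    funext s
    simp [AffineMap.lineMap_apply, Function.comp]
    congr 1
    module
  have hle := hφconv.le_slope_of_hasDerivAt (Set.mem_univ 0) (Set.mem_univ 1) one_pos hφ
  simpa [slope_def_field] using hle

/-- Along the accelerated gradient flow `Ẍ + (3/t)Ẋ + ∇f(X) = 0` for a convex `f`,
the Lyapunov function `E_t = t²(f(X_t) - f(x*)) + 2‖X_t + (t/2)Ẋ_t - x*‖²` is
non-increasing on `(0,∞)`; hence `f(X_t) - f(x*) ≤ 2‖X_0 - x*‖²/t²`. -/
theorem agf_weakly_convex_rate {d : ℕ}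
    (f : EuclideanSpace ℝ (Fin d) → ℝ)
    (hconv : ConvexOn ℝ Set.univ f) (hf : ContDiff ℝ 1 f)
    (xstar : EuclideanSpace ℝ (Fin d)) (hmin : ∀ x, f xstar ≤ f x)
    (X X' X'' : ℝ → EuclideanSpace ℝ (Fin d))
    (hXc : ContinuousOn X (Set.Ici 0))
    (hX : ∀ t > (0 : ℝ), HasDerivAt X (X' t) t)
    (hX' : ∀ t > (0 : ℝ), HasDerivAt X' (X'' t) t)
    (hode : ∀ t > (0 : ℝ), X'' t + (3 / t) • X' t + gradient f (X t) = 0)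
    (hinit : Filter.Tendsto (fun t => t • X' t) (nhdsWithin 0 (Set.Ioi 0)) (nhds 0)) :
    (∀ s t : ℝ, 0 < s → s ≤ t →
        t ^ 2 * (f (X t) - f xstar) + 2 * ‖X t + (t / 2) • X' t - xstar‖ ^ 2 ≤
          s ^ 2 * (f (X s) - f xstar) + 2 * ‖X s + (s / 2) • X' s - xstar‖ ^ 2) ∧
      ∀ t > (0 : ℝ), f (X t) - f xstar ≤ 2 * ‖X 0 - xstar‖ ^ 2 / t ^ 2 := by
  have hfd : Differentiable ℝ f := hf.differentiable one_ne_zero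
  set E : ℝ → ℝ := fun t => t ^ 2 * (f (X t) - f xstar) +
      2 * ‖X t + (t / 2) • X' t - xstar‖ ^ 2 with hEdef
  -- derivative of E
  have hE : ∀ t > (0 : ℝ), HasDerivAt E
      (2 * t * ((f (X t) - f xstar) - ⟪gradient f (X t), X t - xstar⟫)) t := by
    intro t ht
    have hgrad : HasGradientAt f (gradient f (X t)) (X t) :=
      (hfd (X t)).hasGradientAt
    have hF : HasFDerivAt f (InnerProductSpace.toDual ℝ _ (gradient f (X t))) (X t) :=
      hasGradientAt_iff_hasFDerivAt.mp hgrad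
    have hfX : HasDerivAt (fun t => f (X t)) ⟪gradient f (X t), X' t⟫ t := by
      have h := hF.comp_hasDerivAt t (hX t ht); simp only [InnerProductSpace.toDual_apply_apply, Function.comp_def] at h; exact h
    have h1 : HasDerivAt (fun t => t ^ 2 * (f (X t) - f xstar))
        ((2 * t) * (f (X t) - f xstar) + t ^ 2 * ⟪gradient f (X t), X' t⟫) t := by
      have := (hasDerivAt_pow 2 t).mul (hfX.sub_const (f xstar))
      simp [mul_comm, pow_one, -inner_gradient_left, Pi.mul_def] at this ⊢; exact this
    have hsm : HasDerivAt (fun t => (t / 2) • X' t)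
        ((t / 2) • X'' t + (1 / 2 : ℝ) • X' t) t :=
      ((hasDerivAt_id t).div_const 2).smul (hX' t ht)
    have hsum : HasDerivAt (fun t => X t + (t / 2) • X' t - xstar)
        (X' t + ((t / 2) • X'' t + (1 / 2 : ℝ) • X' t)) t :=
      ((hX t ht).add hsm).sub_const xstar
    have hodeE : X'' t = -((3 / t) • X' t) - gradient f (X t) := by
      have h := hode t ht
      have : X'' t + ((3 / t) • X' t + gradient f (X t)) = 0 := by
        rw [← add_assoc]; exact h
      linear_combination (norm := module) this
    have hkey : X' t + ((t / 2) • X'' t + (1 / 2 : ℝ) • X' t)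
        = (-(t / 2)) • gradient f (X t) := by
      rw [hodeE]
      have ht' : t ≠ 0 := ne_of_gt ht
      match_scalars <;> (field_simp; try ring)
    rw [hkey] at hsum
    have hn : HasDerivAt (fun t => ⟪(fun t => X t + (t / 2) • X' t - xstar) t,
          (fun t => X t + (t / 2) • X' t - xstar) t⟫)
        (⟪X t + (t / 2) • X' t - xstar, (-(t / 2)) • gradient f (X t)⟫ +
          ⟪(-(t / 2)) • gradient f (X t), X t + (t / 2) • X' t - xstar⟫) t :=
      hsum.inner ℝ hsum
    have hn' : HasDerivAt (fun t => ‖X t + (t / 2) • X' t - xstar‖ ^ 2)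
        (⟪X t + (t / 2) • X' t - xstar, (-(t / 2)) • gradient f (X t)⟫ +
          ⟪(-(t / 2)) • gradient f (X t), X t + (t / 2) • X' t - xstar⟫) t := by
      simpa only [real_inner_self_eq_norm_sq] using hn
    have htotal := h1.add (hn'.const_mul 2)
    refine htotal.congr_deriv ?_
    have hexp : X t + (t / 2) • X' t - xstar = (X t - xstar) + (t / 2) • X' t := by
      module
    rw [hexp]
    simp only [inner_add_left, inner_add_right, real_inner_smul_left, real_inner_smul_right,
      inner_neg_left, inner_neg_right, neg_smul]
    rw [real_inner_comm (X t - xstar) (gradient f (X t))]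
    rw [real_inner_comm (X' t) (gradient f (X t))]
    ring
  -- antitone
  have hanti : AntitoneOn E (Set.Ioi 0) := by
    apply antitoneOn_of_deriv_nonpos (convex_Ioi 0)
    · intro t ht
      exact (hE t (Set.mem_Ioi.mp ht)).continuousAt.continuousWithinAt
    · rw [interior_Ioi]
      intro t ht
      exact (hE t (Set.mem_Ioi.mp ht)).differentiableAt.differentiableWithinAt
    · rw [interior_Ioi]
      intro t ht
      have ht0 : (0 : ℝ) < t := ht
      rw [(hE t ht0).deriv]
      have hgrad : HasGradientAt f (gradient f (X t)) (X t) := (hfd (X t)).hasGradientAt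
      have hfo := convex_first_order hconv (y := xstar) hgrad
      have hC : ⟪gradient f (X t), xstar - X t⟫ = -⟪gradient f (X t), X t - xstar⟫ := by
        rw [← inner_neg_right]; congr 1; abel
      rw [hC] at hfo
      have : f (X t) - f xstar - ⟪gradient f (X t), X t - xstar⟫ ≤ 0 := by linarith
      have h2t : (0 : ℝ) ≤ 2 * t := by linarith [ht0]
      exact mul_nonpos_of_nonneg_of_nonpos h2t this
  constructor
  · intro s t hs hst
    exact hanti (by exact hs) (lt_of_lt_of_le hs hst) hst
  · -- limit at 0
    have hXlim : Tendsto X (nhdsWithin 0 (Set.Ioi 0)) (nhds (X 0)) :=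
      ((hXc 0 Set.self_mem_Ici).tendsto).mono_left (nhdsWithin_mono 0 Set.Ioi_subset_Ici_self)
    have h1lim : Tendsto (fun s : ℝ => s ^ 2 * (f (X s) - f xstar))
        (nhdsWithin 0 (Set.Ioi 0)) (nhds 0) := by
      have hsq : Tendsto (fun s : ℝ => s ^ 2) (nhdsWithin 0 (Set.Ioi 0)) (nhds 0) := by
        have := ((continuous_pow 2).tendsto (0 : ℝ)).mono_left
          (nhdsWithin_le_nhds (s := Set.Ioi 0))
        simpa using this
      have hfl : Tendsto (fun s : ℝ => f (X s) - f xstar) (nhdsWithin 0 (Set.Ioi 0))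
          (nhds (f (X 0) - f xstar)) :=
        ((hf.continuous.tendsto (X 0)).comp hXlim).sub_const (f xstar)
      simpa using hsq.mul hfl
    have h2lim : Tendsto (fun s : ℝ => X s + (s / 2) • X' s - xstar)
        (nhdsWithin 0 (Set.Ioi 0)) (nhds (X 0 - xstar)) := by
      have hsm : Tendsto (fun s : ℝ => (s / 2) • X' s) (nhdsWithin 0 (Set.Ioi 0)) (nhds 0) := by
        have : (fun s : ℝ => (s / 2) • X' s) = fun s : ℝ => (2⁻¹ : ℝ) • (s • X' s) := by
          funext s; rw [smul_smul]; congr 1; ring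
        rw [this]
        simpa using hinit.const_smul (2⁻¹ : ℝ)
      have := (hXlim.add hsm).sub_const xstar
      simpa using this
    have hElim : Tendsto E (nhdsWithin 0 (Set.Ioi 0))
        (nhds (2 * ‖X 0 - xstar‖ ^ 2)) := by
      have hnlim : Tendsto (fun s : ℝ => 2 * ‖X s + (s / 2) • X' s - xstar‖ ^ 2)
          (nhdsWithin 0 (Set.Ioi 0)) (nhds (2 * ‖X 0 - xstar‖ ^ 2)) :=
        ((h2lim.norm.pow 2).const_mul 2)
      simpa using h1lim.add hnlim
    intro t ht
    have hEle : E t ≤ 2 * ‖X 0 - xstar‖ ^ 2 := by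
      apply ge_of_tendsto hElim
      filter_upwards [Ioc_mem_nhdsGT ht] with s hs
      exact hanti hs.1 ht hs.2
    have hnn : (0 : ℝ) ≤ 2 * ‖X t + (t / 2) • X' t - xstar‖ ^ 2 := by positivity
    have ht2 : (0 : ℝ) < t ^ 2 := pow_pos ht 2
    rw [le_div_iff₀ ht2]
    have : t ^ 2 * (f (X t) - f xstar) ≤ E t := by
      rw [hEdef]; dsimp only; linarith
    nlinarith [hEle]
end

section
/- If a nonnegative sequence (E_k) satisfies E_{k+1} - E_k ≤ E_{k+1}/(k+9)² for all k ≥ 0, then E_k ≤ (9(k+8)/(8(k+9)))·E_0 ≤ (9/8)·E_0 for all k ≥ 0. -/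
/-- If a nonnegative sequence satisfies `E_{k+1} - E_k ≤ E_{k+1}/(k+9)²` for all `k`, then
`E_k ≤ (9(k+8)/(8(k+9))) E_0 ≤ (9/8) E_0`. -/
theorem lyapunov_sequence_bound (E : ℕ → ℝ) (hnn : ∀ k, 0 ≤ E k)
    (hrec : ∀ k : ℕ, E (k + 1) - E k ≤ E (k + 1) / ((k : ℝ) + 9) ^ 2) :
    ∀ k : ℕ,
      E k ≤ 9 * ((k : ℝ) + 8) / (8 * ((k : ℝ) + 9)) * E 0 ∧ E k ≤ 9 / 8 * E 0 := by
  have main : ∀ k : ℕ, E k ≤ 9 * ((k : ℝ) + 8) / (8 * ((k : ℝ) + 9)) * E 0 := by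
    intro k
    induction k with
    | zero => simp; nlinarith [hnn 0]
    | succ k ih =>
      have hk : (0:ℝ) ≤ (k:ℝ) := Nat.cast_nonneg k
      have h1 := hrec k
      -- E (k+1) * (1 - 1/(k+9)^2) ≤ E k
      have h2 : E (k + 1) * (((k:ℝ)+8) * ((k:ℝ)+10)) ≤ E k * ((k:ℝ)+9)^2 := by
        have hpos : (0:ℝ) < ((k:ℝ)+9)^2 := by positivity
        rw [div_eq_mul_inv] at h1
        nlinarith [mul_le_mul_of_nonneg_right h1 hpos.le, hnn (k+1),
          mul_inv_cancel₀ (ne_of_gt hpos)]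
      push_cast
      have h3 : E k * ((k:ℝ)+9)^2 ≤ 9 * ((k : ℝ) + 8) / (8 * ((k : ℝ) + 9)) * E 0 * ((k:ℝ)+9)^2 := by
        nlinarith [ih]
      have h4 : 9 * ((k : ℝ) + 8) / (8 * ((k : ℝ) + 9)) * E 0 * ((k:ℝ)+9)^2
          = 9 * ((k:ℝ)+8) * ((k:ℝ)+9) / 8 * E 0 := by
        field_simp
      rw [h4] at h3
      rw [div_mul_eq_mul_div, le_div_iff₀ (show (0:ℝ) < 8*((k:ℝ)+1+9) by positivity)]
      nlinarith [h2, h3, hnn (k+1)]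
  intro k
  refine ⟨main k, le_trans (main k) ?_⟩
  have hk : (0:ℝ) ≤ (k:ℝ) := Nat.cast_nonneg k
  have : 9 * ((k : ℝ) + 8) / (8 * ((k : ℝ) + 9)) ≤ 9 / 8 := by
    rw [div_le_div_iff₀ (by positivity) (by norm_num)]; nlinarith
  nlinarith [hnn 0]
end
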